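/- arXiv:2505.01411 — 5 statements merged into one kernel-verified Lean document; each statement's English description precedes it below -/
import Mathlib

section
/- Let G be a group and let X ⊆ G be a finite subset invariant under conjugation. If every element of X has finite order, then the subgroup generated by X is finite. -/
section Aux
variable {G : Type*} [Group G] (X : Set G)
  (hnorm : ∀ g : G, ∀ x ∈ X, g⁻¹ * x * g ∈ X)

include hnorm in
lemma conj_pow_mem (a : G) (k : ℕ) {x : G} (hx : x ∈ X) :
    (a ^ k)⁻¹ * x * a ^ k ∈ X := by
  induction k with
  | zero => simpa using hx
  | succ n ih =>
      have := hnorm a _ ih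
      have h : (a ^ (n+1))⁻¹ * x * a ^ (n+1)
          = a⁻¹ * ((a ^ n)⁻¹ * x * a ^ n) * a := by
        rw [pow_succ]; group
      rw [h]; exact this

include hnorm in
/-- Extract all copies of `a` in a word to the front. -/
lemma extract [DecidableEq G] (a : G) (ha : a ∈ X) :
    ∀ l : List G, (∀ y ∈ l, y ∈ X) →
    ∃ l' : List G, (∀ y ∈ l', y ∈ X) ∧ l'.length = l.length - l.count a ∧
      l.prod = a ^ (l.count a) * l'.prod := by
  intro l
  induction l with
  | nil => intro _; exact ⟨[], by simp, by simp, by simp⟩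
  | cons x t ih =>
      intro hmem
      obtain ⟨l', hl'X, hl'len, hl'prod⟩ := ih (fun y hy => hmem y (List.mem_cons_of_mem _ hy))
      by_cases hxa : x = a
      · subst hxa
        refine ⟨l', hl'X, ?_, ?_⟩
        · simp only [List.count_cons_self, List.length_cons]
          omega
        · rw [List.prod_cons, hl'prod, List.count_cons_self, pow_succ']
          group
      · set k := t.count a with hk
        refine ⟨((a ^ k)⁻¹ * x * a ^ k) :: l', ?_, ?_, ?_⟩
        · intro y hy
          rcases List.mem_cons.1 hy with h | h
          · subst h; exact conj_pow_mem X hnorm a k (hmem x List.mem_cons_self)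
          · exact hl'X y h
        · have hcle : t.count a ≤ t.length := List.count_le_length
          simp only [List.length_cons, List.count_cons_of_ne (by simpa using hxa), ← hk]
          omega
        · rw [List.prod_cons, List.prod_cons, hl'prod,
            List.count_cons_of_ne (by simpa using hxa), ← hk]
          group

lemma inv_word (htor : ∀ x ∈ X, IsOfFinOrder x) :
    ∀ l : List G, (∀ y ∈ l, y ∈ X) →
      ((l.reverse.map fun y => List.replicate (orderOf y - 1) y).flatten).prod = l.prod⁻¹ := by
  intro l
  induction l with
  | nil => simp
  | cons x t ih =>
      intro hl
      have hx : x ∈ X := hl x List.mem_cons_self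
      have ih' := ih (fun y hy => hl y (List.mem_cons_of_mem _ hy))
      simp only [List.reverse_cons, List.map_append, List.flatten_append,
        List.prod_append, List.prod_cons, mul_inv_rev, ih']
      simp only [List.map_cons, List.map_nil, List.flatten_cons, List.flatten_nil,
        List.append_nil, List.prod_replicate]
      congr 1
      have h1 := pow_orderOf_eq_one x
      have hpos : 0 < orderOf x := (htor x hx).orderOf_pos
      rw [← Nat.sub_add_cancel hpos, pow_succ] at h1
      rw [eq_inv_iff_mul_eq_one]
      simpa using h1

lemma pmap_val : ∀ (l : List G) (h : ∀ y ∈ l, y ∈ X),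
    (l.pmap (fun y hy => (⟨y, hy⟩ : ↥X)) h).map Subtype.val = l := by
  intro l
  induction l with
  | nil => simp
  | cons x t ih => intro h; simp [ih]

end Aux

/-- A finite normal subset consisting of torsion elements generates a finite subgroup. -/
theorem finite_closure_of_finite_normal_torsion_set {G : Type*} [Group G] (X : Set G)
    (hfin : X.Finite) (hnorm : ∀ g : G, ∀ x ∈ X, g⁻¹ * x * g ∈ X)
    (htor : ∀ x ∈ X, IsOfFinOrder x) :
    Finite (Subgroup.closure X) := by
  classical
  set N : ℕ := ∑ a ∈ hfin.toFinset, orderOf a with hN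
  -- shortening lemma
  have shorten : ∀ l : List G, (∀ y ∈ l, y ∈ X) → N < l.length →
      ∃ l' : List G, (∀ y ∈ l', y ∈ X) ∧ l'.length < l.length ∧ l'.prod = l.prod := by
    intro l hlX hlen
    -- some a has count > orderOf a
    have : ∃ a ∈ hfin.toFinset, orderOf a < l.count a := by
      by_contra hcon
      push_neg at hcon
      have h1 : l.length = ∑ a ∈ hfin.toFinset, l.count a := by
        have := Multiset.sum_count_eq_card (s := hfin.toFinset) (m := (l : Multiset G))
          (fun a ha => hfin.mem_toFinset.2 (hlX a (by simpa using ha)))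
        simpa using this.symm
      have : l.length ≤ N := by
        rw [h1, hN]; exact Finset.sum_le_sum (fun a ha => hcon a ha)
      omega
    obtain ⟨a, haf, hca⟩ := this
    have haX : a ∈ X := hfin.mem_toFinset.1 haf
    have hord : 0 < orderOf a := (htor a haX).orderOf_pos
    obtain ⟨l', hl'X, hl'len, hl'prod⟩ := extract X hnorm a haX l hlX
    set c := l.count a with hc
    refine ⟨List.replicate (c % orderOf a) a ++ l', ?_, ?_, ?_⟩
    · intro y hy
      rcases List.mem_append.1 hy with h | h
      · rw [List.eq_of_mem_replicate h]; exact haX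
      · exact hl'X y h
    · have hclen : c ≤ l.length := List.count_le_length
      have : c % orderOf a < orderOf a := Nat.mod_lt _ hord
      simp only [List.length_append, List.length_replicate, hl'len]
      omega
    · rw [List.prod_append, List.prod_replicate, hl'prod]
      congr 1
      conv_rhs => rw [← Nat.div_add_mod c (orderOf a)]
      rw [pow_add, pow_mul, pow_orderOf_eq_one, one_pow, one_mul]
  -- every word reduces to length ≤ N
  have reduce : ∀ n : ℕ, ∀ l : List G, l.length ≤ n → (∀ y ∈ l, y ∈ X) →
      ∃ l' : List G, (∀ y ∈ l', y ∈ X) ∧ l'.length ≤ N ∧ l'.prod = l.prod := by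
    intro n
    induction n with
    | zero => intro l hl hlX; exact ⟨l, hlX, by omega, rfl⟩
    | succ n ih =>
        intro l hl hlX
        by_cases h : l.length ≤ N
        · exact ⟨l, hlX, h, rfl⟩
        · obtain ⟨l', hl'X, hl'len, hl'prod⟩ := shorten l hlX (by omega)
          obtain ⟨l'', h1, h2, h3⟩ := ih l' (by omega) hl'X
          exact ⟨l'', h1, h2, h3.trans hl'prod⟩
  -- the finite candidate set
  haveI : Finite ↥X := hfin.to_subtype
  have hSfin : ((fun l : List ↥X => (l.map Subtype.val).prod) ''
      {l | l.length ≤ N}).Finite :=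
    Set.Finite.image _ (List.finite_length_le ↥X N)
  suffices h : ((Subgroup.closure X : Set G)).Finite from h.to_subtype
  apply hSfin.subset
  intro g hg
  -- g is a product of a word over X
  have hword : ∃ l : List G, (∀ y ∈ l, y ∈ X) ∧ l.prod = g := by
    refine Subgroup.closure_induction ?_ ?_ ?_ ?_ hg
    · intro x hx; exact ⟨[x], by simpa using hx, by simp⟩
    · exact ⟨[], by simp, by simp⟩
    · rintro x y _ _ ⟨lx, hlx, rfl⟩ ⟨ly, hly, rfl⟩
      refine ⟨lx ++ ly, ?_, by simp⟩
      intro z hz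
      rcases List.mem_append.1 hz with h | h
      exacts [hlx z h, hly z h]
    · rintro x _ ⟨l, hl, rfl⟩
      refine ⟨(l.reverse.map (fun y => List.replicate (orderOf y - 1) y)).flatten, ?_,
        inv_word X htor l hl⟩
      intro z hz
      simp only [List.mem_flatten, List.mem_map, List.mem_reverse] at hz
      obtain ⟨t, ⟨y, hy, rfl⟩, hzt⟩ := hz
      rw [List.eq_of_mem_replicate hzt]
      exact hl y hy
  obtain ⟨l, hlX, rfl⟩ := hword
  obtain ⟨l', hl'X, hl'len, hl'prod⟩ := reduce l.length l le_rfl hlX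
  refine ⟨l'.pmap (fun y hy => (⟨y, hy⟩ : ↥X)) hl'X, ?_, ?_⟩
  · simp [Set.mem_setOf_eq, List.length_pmap, hl'len]
  · rw [← hl'prod]
    simp only [pmap_val]
end

section
/- Let G be a finite group and N ⊆ G a normal subset that is weakly rational, i.e., for every g ∈ N and every integer m coprime to |G|, g^m ∈ N. Then every element of N has order at most 2·|N|^2. Consequently |⟨N⟩| is bounded by a function of |N| alone. -/
section AuxTotient

lemma aux_odd_le_sq_totient : ∀ n : ℕ, Odd n → n ≤ n.totient ^ 2 := by
  intro n
  induction n using Nat.recOnPosPrimePosCoprime with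
  | prime_pow p e hp he =>
    intro hodd
    have hp3 : 3 ≤ p := by
      rcases hp.eq_two_or_odd' with h | h
      · exfalso
        rw [h] at hodd
        exact (Nat.not_odd_iff_even.mpr (Nat.even_pow.mpr ⟨even_two, he.ne'⟩)) hodd
      · rcases h with ⟨m, rfl⟩
        have := hp.two_le; omega
    rw [Nat.totient_prime_pow hp he]
    obtain ⟨q, rfl⟩ : ∃ q, p = q + 1 := ⟨p - 1, by omega⟩
    have h1 : (q+1) ^ e ≤ (q+1) ^ (e - 1) * (q+1) ^ (e - 1) * (q+1) := by
      calc (q+1) ^ e ≤ (q+1) ^ (2 * (e - 1) + 1) := Nat.pow_le_pow_right hp.pos (by omega)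
        _ = (q+1) ^ (e-1) * (q+1) ^ (e-1) * (q+1) := by ring
    refine h1.trans ?_
    have h2 : q + 1 ≤ q * q := by nlinarith [hp3]
    calc (q+1) ^ (e-1) * (q+1) ^ (e-1) * (q+1)
        ≤ (q+1) ^ (e-1) * (q+1) ^ (e-1) * (q*q) := Nat.mul_le_mul_left _ h2
      _ = ((q+1) ^ (e-1) * (q+1-1)) ^ 2 := by simp; ring
  | zero => intro h; simp at h
  | one => intro _; norm_num
  | coprime a b ha hb hab iha ihb =>
    intro hodd
    rw [Nat.odd_mul] at hodd
    rw [Nat.totient_mul hab, mul_pow]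
    exact Nat.mul_le_mul (iha hodd.1) (ihb hodd.2)

lemma aux_le_two_mul_sq_totient (n : ℕ) : n ≤ 2 * n.totient ^ 2 := by
  rcases Nat.eq_zero_or_pos n with rfl | hn
  · simp
  obtain ⟨a, m, hm, rfl⟩ : ∃ a m, Odd m ∧ n = 2 ^ a * m := by
    refine ⟨n.factorization 2, ordCompl[2] n, ?_, (Nat.ordProj_mul_ordCompl_eq_self n 2).symm⟩
    have := Nat.not_dvd_ordCompl Nat.prime_two hn.ne'
    rw [Nat.odd_iff]; omega
  have hcop : Nat.Coprime (2 ^ a) m := by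
    apply Nat.Coprime.pow_left
    have h2m : ¬ (2 ∣ m) := by rw [Nat.odd_iff] at hm; omega
    exact Nat.prime_two.coprime_iff_not_dvd.mpr h2m
  rw [Nat.totient_mul hcop, mul_pow]
  have h2 : 2 ^ a ≤ 2 * (2 ^ a).totient ^ 2 := by
    rcases Nat.eq_zero_or_pos a with rfl | ha
    · norm_num
    · rw [Nat.totient_prime_pow Nat.prime_two ha]
      calc 2 ^ a ≤ 2 ^ (2 * (a-1) + 1) := Nat.pow_le_pow_right (by norm_num) (by omega)
        _ = 2 * (2 ^ (a-1) * (2-1)) ^ 2 := by ring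
  exact le_trans (Nat.mul_le_mul h2 (aux_odd_le_sq_totient m hm)) (le_of_eq (mul_assoc _ _ _))

end AuxTotient

section AuxOrder

lemma aux_order_totient_le {G : Type} [Group G] [Finite G] (N : Set G)
    (hN2 : ∀ g ∈ N, ∀ m : ℤ, IsCoprime m (Nat.card G : ℤ) → g ^ m ∈ N)
    {g : G} (hg : g ∈ N) : (orderOf g).totient ≤ Nat.card N := by
  have hn : 0 < orderOf g := orderOf_pos g
  haveI : NeZero (orderOf g) := ⟨hn.ne'⟩
  haveI : NeZero (Nat.card G) := ⟨Nat.card_pos.ne'⟩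
  have hdvd : orderOf g ∣ Nat.card G := orderOf_dvd_natCard g
  have hmem : ∀ u : (ZMod (orderOf g))ˣ, g ^ ((u : ZMod (orderOf g)).val) ∈ N := by
    intro u
    obtain ⟨v, hv⟩ := ZMod.unitsMap_surjective hdvd u
    set m := (v : ZMod (Nat.card G)).val with hm
    have hcop : Nat.Coprime m (Nat.card G) := ZMod.val_coe_unit_coprime v
    have h1 : g ^ (m : ℤ) ∈ N := hN2 g hg m (Nat.isCoprime_iff_coprime.mpr hcop)
    rw [zpow_natCast] at h1
    have h2 : g ^ m = g ^ ((u : ZMod (orderOf g)).val) := by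
      rw [pow_eq_pow_iff_modEq]
      have : ((m : ZMod (orderOf g))) = (u : ZMod (orderOf g)) := by
        rw [← hv]
        simp [ZMod.unitsMap_def, hm, ZMod.natCast_val, ZMod.castHom_apply]
      have := congrArg ZMod.val this
      rw [ZMod.val_natCast] at this
      have hu := ZMod.val_lt (u : ZMod (orderOf g))
      simp only [Nat.ModEq]
      rw [Nat.mod_eq_of_lt hu]
      exact this
    rwa [h2] at h1
  have hinj : Function.Injective
      (fun u : (ZMod (orderOf g))ˣ => (⟨g ^ ((u : ZMod (orderOf g)).val), hmem u⟩ : N)) := by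
    intro u w h
    simp only [Subtype.mk_eq_mk] at h
    rw [pow_eq_pow_iff_modEq] at h
    have hu := ZMod.val_lt (u : ZMod (orderOf g))
    have hw := ZMod.val_lt (w : ZMod (orderOf g))
    have : (u : ZMod (orderOf g)).val = (w : ZMod (orderOf g)).val := by
      simp only [Nat.ModEq] at h
      rwa [Nat.mod_eq_of_lt hu, Nat.mod_eq_of_lt hw] at h
    exact Units.ext (ZMod.val_injective _ this)
  calc (orderOf g).totient = Nat.card (ZMod (orderOf g))ˣ := by
        rw [Nat.card_eq_fintype_card, ZMod.card_units_eq_totient]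
    _ ≤ Nat.card N := Nat.card_le_card_of_injective _ hinj

end AuxOrder

section AuxConj

variable {G : Type} [Group G]

/-- Conjugation permutation action on a conjugation-invariant set. -/
def auxConjPermHom (N : Set G) (hN1 : ∀ g : G, ∀ s ∈ N, g⁻¹ * s * g ∈ N) :
    G →* Equiv.Perm N where
  toFun x :=
    { toFun := fun s => ⟨x * s * x⁻¹, by simpa using hN1 x⁻¹ s s.2⟩
      invFun := fun s => ⟨x⁻¹ * s * x, hN1 x s s.2⟩
      left_inv := fun s => by ext; simp [mul_assoc]
      right_inv := fun s => by ext; simp [mul_assoc] }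
  map_one' := by ext s; simp
  map_mul' x y := by ext s; simp [mul_assoc]

lemma auxConjPermHom_eq_one_iff (N : Set G) (hN1 : ∀ g : G, ∀ s ∈ N, g⁻¹ * s * g ∈ N) (x : G) :
    auxConjPermHom N hN1 x = 1 ↔ x ∈ Subgroup.centralizer N := by
  rw [Subgroup.mem_centralizer_iff]
  constructor
  · intro h s hs
    have := congrArg (fun e : Equiv.Perm N => (e ⟨s, hs⟩ : G)) h
    simp [auxConjPermHom] at this
    rw [mul_inv_eq_iff_eq_mul] at this
    exact this.symm
  · intro h
    ext s
    simp [auxConjPermHom]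
    rw [mul_inv_eq_iff_eq_mul]
    exact (h s s.2).symm

end AuxConj

section AuxCommutator

variable {H : Type*} [Group H]

open scoped commutatorElement

lemma aux_commutator_mul_center {a b z w : H} (hz : z ∈ Subgroup.center H)
    (hw : w ∈ Subgroup.center H) : ⁅a * z, b * w⁆ = ⁅a, b⁆ := by
  have hz' := Subgroup.mem_center_iff.mp hz
  have hw' := Subgroup.mem_center_iff.mp hw
  have h1 : ∀ c : H, z * c * z⁻¹ = c := fun c => by rw [← hz' c]; group
  have h2 : ∀ c : H, w * c * w⁻¹ = c := fun c => by rw [← hw' c]; group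
  calc ⁅a * z, b * w⁆ = a * (z * (b * w) * z⁻¹) * a⁻¹ * w⁻¹ * b⁻¹ := by
        simp only [commutatorElement_def]; group
    _ = a * b * (w * a⁻¹ * w⁻¹) * b⁻¹ := by rw [h1]; group
    _ = ⁅a, b⁆ := by rw [h2]; simp only [commutatorElement_def]

lemma aux_card_commutatorSet_le_index_center_sq [Finite H] :
    Nat.card (commutatorSet H) ≤ (Subgroup.center H).index ^ 2 := by
  set Z := Subgroup.center H
  have hli : ∀ (a₁ b₁ a₂ b₂ : H), (QuotientGroup.leftRel Z) a₁ a₂ →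
      (QuotientGroup.leftRel Z) b₁ b₂ → ⁅a₁, b₁⁆ = ⁅a₂, b₂⁆ := by
    intro a₁ b₁ a₂ b₂ ha hb
    rw [QuotientGroup.leftRel_apply] at ha hb
    have ha2 : a₂ = a₁ * (a₁⁻¹ * a₂) := by group
    have hb2 : b₂ = b₁ * (b₁⁻¹ * b₂) := by group
    rw [ha2, hb2, aux_commutator_mul_center ha hb]
  let ff : H ⧸ Z → H ⧸ Z → H := Quotient.lift₂ (fun a b => ⁅a, b⁆) hli
  have hsub : commutatorSet H ⊆ Set.range (fun p : (H ⧸ Z) × (H ⧸ Z) => ff p.1 p.2) := by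
    rintro x ⟨a, b, rfl⟩
    exact ⟨(QuotientGroup.mk a, QuotientGroup.mk b), rfl⟩
  calc Nat.card (commutatorSet H) ≤ Nat.card (Set.range
        (fun p : (H ⧸ Z) × (H ⧸ Z) => ff p.1 p.2)) := Nat.card_mono (Set.toFinite _) hsub
    _ ≤ Nat.card ((H ⧸ Z) × (H ⧸ Z)) := by
        rw [← Set.image_univ]
        exact le_trans (Nat.card_image_le Set.finite_univ) (le_of_eq Nat.card_univ)
    _ = Z.index ^ 2 := by rw [Nat.card_prod, Subgroup.index, sq]

end AuxCommutator

section AuxAbelianization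

lemma aux_card_abelianization_le {H : Type*} [Group H] [Finite H] (S : Set H)
    (hgen : Subgroup.closure S = ⊤) (E : ℕ) (hE : 2 ≤ E)
    (hord : ∀ s ∈ S, orderOf s ∣ E) :
    Nat.card (Abelianization H) ≤ E ^ (Nat.card S) := by
  classical
  haveI : NeZero E := ⟨by omega⟩
  haveI : Fact (1 < E) := ⟨by omega⟩
  haveI : Fintype S := Fintype.ofFinite _
  set x : S → Abelianization H := fun s => Abelianization.of s.1 with hx
  have hxE : ∀ s : S, x s ^ E = 1 := by
    intro s
    apply orderOf_dvd_iff_pow_eq_one.mp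
    exact dvd_trans (orderOf_map_dvd Abelianization.of s.1) (hord s.1 s.2)
  have key : ∀ (s : S) (a b : ZMod E),
      x s ^ (a + b).val = x s ^ a.val * x s ^ b.val := by
    intro s a b
    rw [ZMod.val_add, ← pow_eq_pow_mod _ (hxE s), pow_add]
  let ν : Multiplicative (S → ZMod E) →* Abelianization H :=
    MonoidHom.mk' (fun a => ∏ s : S, x s ^ ((Multiplicative.toAdd a) s).val)
      (by
        intro a b
        simp only [toAdd_mul, Pi.add_apply]
        rw [← Finset.prod_mul_distrib]
        exact Finset.prod_congr rfl fun s _ => key s _ _)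
  have hsurj : Function.Surjective ν := by
    intro y
    obtain ⟨h, rfl⟩ : ∃ h, Abelianization.of h = y := Quotient.exists_rep y
    have hmem : h ∈ Subgroup.comap (Abelianization.of (G := H)) ν.range := by
      have : h ∈ Subgroup.closure S := by rw [hgen]; trivial
      refine Subgroup.closure_le _ |>.mpr ?_ this
      intro s hs
      refine ⟨Multiplicative.ofAdd (Pi.single (⟨s, hs⟩ : S) (1 : ZMod E)), ?_⟩
      simp only [ν, MonoidHom.mk'_apply, toAdd_ofAdd]
      rw [Finset.prod_eq_single (⟨s, hs⟩ : S)]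
      · rw [Pi.single_eq_same, ZMod.val_one, pow_one]
      · intro t _ ht
        rw [Pi.single_eq_of_ne ht, ZMod.val_zero, pow_zero]
      · intro ht
        exact absurd (Finset.mem_univ _) ht
    exact hmem
  calc Nat.card (Abelianization H) ≤ Nat.card (Multiplicative (S → ZMod E)) :=
        Nat.card_le_card_of_surjective ν hsurj
    _ = E ^ (Nat.card S) := by
        rw [Nat.card_congr (Multiplicative.toAdd (α := S → ZMod E)), Nat.card_fun,
          Nat.card_zmod]

end AuxAbelianization

/-- In a finite group, elements of a weakly rational normal subset `N` have order at
most `2|N|^2`; consequently `|⟨N⟩|` is bounded by a function of `|N|` alone. -/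
theorem weakly_rational_normal_subset_bound :
    ∃ f : ℕ → ℕ, ∀ (G : Type) [inst : Group G] [inst2 : Finite G] (N : Set G),
      (∀ g : G, ∀ s ∈ N, g⁻¹ * s * g ∈ N) →
      (∀ g ∈ N, ∀ m : ℤ, IsCoprime m (Nat.card G : ℤ) → g ^ m ∈ N) →
      (∀ g ∈ N, orderOf g ≤ 2 * (Nat.card N) ^ 2) ∧
        Nat.card (Subgroup.closure N) ≤ f (Nat.card N) := by
  classical
  refine ⟨fun k => (Finset.range (k.factorial ^ 2 + 1)).sup Subgroup.cardCommutatorBound *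
    ((2 * k ^ 2).factorial) ^ k + 1, ?_⟩
  intro G _ _ N hN1 hN2
  set k := Nat.card N with hk
  have horder : ∀ g ∈ N, orderOf g ≤ 2 * k ^ 2 := by
    intro g hg
    calc orderOf g ≤ 2 * (orderOf g).totient ^ 2 := aux_le_two_mul_sq_totient _
      _ ≤ 2 * k ^ 2 :=
        Nat.mul_le_mul_left 2 (Nat.pow_le_pow_left (aux_order_totient_le N hN2 hg) 2)
  refine ⟨horder, ?_⟩
  show Nat.card (Subgroup.closure N) ≤
    (Finset.range (k.factorial ^ 2 + 1)).sup Subgroup.cardCommutatorBound *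
      ((2 * k ^ 2).factorial) ^ k + 1
  rcases Nat.eq_zero_or_pos k with hk0 | hkpos
  · -- N is empty
    have : IsEmpty N := by
      rcases Nat.card_eq_zero.mp hk0 with h | h
      · exact h
      · exact absurd h (not_infinite_iff_finite.mpr inferInstance)
    have hNe : N = ∅ := Set.isEmpty_coe_sort.mp this
    rw [hNe, Subgroup.closure_empty, Subgroup.card_bot]
    exact Nat.le_add_left 1 _
  -- main case
  set H := Subgroup.closure N with hH
  set Z := Subgroup.center ↥H with hZ
  -- Step A : index of the center
  let ψ := (auxConjPermHom N hN1).comp H.subtype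
  have hker : ψ.ker ≤ Z := by
    intro x hx
    have hx' : (x : G) ∈ Subgroup.centralizer N :=
      (auxConjPermHom_eq_one_iff N hN1 _).mp hx
    have hle : H ≤ Subgroup.centralizer {(x : G)} := by
      refine (Subgroup.closure_le _).mpr ?_
      intro s hs
      rw [SetLike.mem_coe, Subgroup.mem_centralizer_iff]
      intro y hy
      rw [Set.mem_singleton_iff] at hy
      subst hy
      exact (Subgroup.mem_centralizer_iff.mp hx' s hs).symm
    rw [hZ, Subgroup.mem_center_iff]
    intro h
    have := Subgroup.mem_centralizer_iff.mp (hle h.2) (x : G) rfl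
    exact Subtype.ext this.symm
  have hindex : Z.index ≤ k.factorial := by
    have h1 : Z.index ∣ ψ.ker.index := Subgroup.index_dvd_of_le hker
    have h2 : ψ.ker.index = Nat.card ψ.range := Subgroup.index_ker ψ
    have h3 : Nat.card ψ.range ≤ Nat.card (Equiv.Perm N) := Subgroup.card_le_card_group _
    have h4 : Nat.card (Equiv.Perm N) = k.factorial := by
      haveI : Fintype N := Fintype.ofFinite _
      rw [Nat.card_eq_fintype_card, Fintype.card_perm, hk, Nat.card_eq_fintype_card]
    have h5 : ψ.ker.index ≠ 0 := Subgroup.index_ne_zero_of_finite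
    refine le_trans (Nat.le_of_dvd (Nat.pos_of_ne_zero h5) h1) ?_
    rw [h2]
    exact le_trans h3 (le_of_eq h4)
  -- Step B : commutatorSet bound
  have hcs : Nat.card (commutatorSet ↥H) ≤ k.factorial ^ 2 := by
    calc Nat.card (commutatorSet ↥H) ≤ Z.index ^ 2 :=
          aux_card_commutatorSet_le_index_center_sq
      _ ≤ k.factorial ^ 2 := Nat.pow_le_pow_left hindex 2
  -- Step C : Schur bound on the commutator subgroup
  have hschur : Nat.card (commutator ↥H) ≤
      (Finset.range (k.factorial ^ 2 + 1)).sup Subgroup.cardCommutatorBound := by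
    refine le_trans (Subgroup.card_commutator_le_of_finite_commutatorSet ↥H) ?_
    exact Finset.le_sup (Finset.mem_range.mpr (by omega))
  -- Step D : abelianization bound
  set S : Set ↥H := ((↑) : ↥H → G) ⁻¹' N with hS
  have hgen : Subgroup.closure S = ⊤ := Subgroup.closure_closure_coe_preimage
  have hcardS : Nat.card S = k := by
    rw [hk]
    refine Nat.card_congr ⟨fun s => ⟨s.1, s.2⟩, fun n => ⟨⟨n.1, Subgroup.subset_closure n.2⟩, n.2⟩,
      fun s => by ext; rfl, fun n => by ext; rfl⟩
  have hE2 : 2 ≤ (2 * k ^ 2).factorial := by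
    have h22 : 2 ≤ 2 * k ^ 2 := by nlinarith [hkpos]
    exact le_trans (by norm_num [Nat.factorial]) (Nat.factorial_le h22)
  have hordS : ∀ s ∈ S, orderOf s ∣ (2 * k ^ 2).factorial := by
    intro s hs
    have h1 : orderOf s = orderOf (s : G) := (Subgroup.orderOf_coe s).symm
    rw [h1]
    exact Nat.dvd_factorial (orderOf_pos _) (horder _ hs)
  have hab : Nat.card (Abelianization ↥H) ≤ ((2 * k ^ 2).factorial) ^ k := by
    have h := aux_card_abelianization_le S hgen _ hE2 hordS
    rwa [hcardS] at h
  -- Step E : combine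
  have hsplit : Nat.card ↥H =
      Nat.card (↥H ⧸ commutator ↥H) * Nat.card (commutator ↥H) :=
    Subgroup.card_eq_card_quotient_mul_card_subgroup _
  have habq : Nat.card (↥H ⧸ commutator ↥H) = Nat.card (Abelianization ↥H) := rfl
  have hq : Nat.card (↥H ⧸ commutator ↥H) ≤ ((2 * k ^ 2).factorial) ^ k := habq ▸ hab
  rw [hsplit]
  refine le_trans (Nat.mul_le_mul hq hschur) ?_
  rw [mul_comm]
  omega
end

section
/- Let G be a finite group, m coprime to |G|, and let C₁, …, C_ℓ, C be conjugacy classes of G. For a tuple of classes, let λ((C_i); C) denote the number of tuples (g₁,…,g_ℓ) ∈ C₁×⋯×C_ℓ with g₁⋯g_ℓ = h, for any fixed h ∈ C (this count is independent of the choice of h ∈ C). Then λ((C_i); C) = λ((C_i^m); C^m), where C^m = {g^m : g ∈ C}. -/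
open Finset

set_option linter.unusedSectionVars false
set_option maxHeartbeats 1000000

section OrbitSum

/-- Weighted orbit-counting mod a prime: a sum of an invariant `ℕ`-valued function over a
finite type is congruent mod `p` to its sum over the fixed points of a map of order dividing
`p`. -/
lemma sum_iterate_modEq {α : Type*} [Fintype α] [DecidableEq α] {p : ℕ} (hp : p.Prime)
    (g : α → α) (hg : g^[p] = id) (f : α → ℕ) (hf : ∀ a, f (g a) = f a) :
    (∑ a : α, f a) ≡ ∑ a ∈ Finset.univ.filter (fun a => g a = a), f a [MOD p] := by
  classical
  have hginj : Function.Injective g := by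
    have hli : Function.LeftInverse g^[p - 1] g := by
      intro x
      have : g^[p-1] (g x) = g^[(p-1)+1] x := (Function.iterate_succ_apply g (p - 1) x).symm
      rw [this, Nat.sub_add_cancel hp.pos, hg]
      rfl
    exact hli.injective
  have hfit : ∀ k (b : α), f (g^[k] b) = f b := by
    intro k b
    induction k with
    | zero => rfl
    | succ k ihk => rw [Function.iterate_succ_apply', hf]; exact ihk
  suffices H : ∀ s : Finset α, (∀ a ∈ s, g a ∈ s) →
      (∑ a ∈ s, f a) ≡ ∑ a ∈ s.filter (fun a => g a = a), f a [MOD p] by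
    exact H Finset.univ (fun a _ => Finset.mem_univ _)
  intro s
  induction s using Finset.strongInduction with
  | _ s ih =>
    intro hs
    by_cases hall : ∀ a ∈ s, g a = a
    · rw [Finset.filter_true_of_mem hall]
    · push_neg at hall
      obtain ⟨a, has, hna⟩ := hall
      have hit : ∀ k, ∀ b ∈ s, g^[k] b ∈ s := by
        intro k
        induction k with
        | zero => exact fun b hb => hb
        | succ k ihk =>
          intro b hb
          rw [Function.iterate_succ_apply']
          exact hs _ (ihk b hb)
      set O : Finset α := (Finset.range p).image (fun k => g^[k] a) with hO
      have haO : a ∈ O := Finset.mem_image.2 ⟨0, Finset.mem_range.2 hp.pos, rfl⟩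
      have hOs : O ⊆ s := by
        intro b hb
        obtain ⟨k, _, rfl⟩ := Finset.mem_image.1 hb
        exact hit k a has
      have hfO : ∀ b ∈ O, f b = f a := by
        intro b hb
        obtain ⟨k, _, rfl⟩ := Finset.mem_image.1 hb
        exact hfit k a
      have hperiod : ∀ d, d < p → g^[d] a = a → d = 0 := by
        intro d hdp hda
        by_contra hd0
        have pd : Function.IsPeriodicPt g d a := hda
        have pp : Function.IsPeriodicPt g p a := by
          show g^[p] a = a
          rw [hg]; rfl
        have pg : Function.IsPeriodicPt g (Nat.gcd d p) a := pd.gcd pp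
        have hco : Nat.gcd d p = 1 := by
          have hpd : ¬ p ∣ d := fun hdvd => hd0 (Nat.eq_zero_of_dvd_of_lt hdvd hdp)
          have : Nat.Coprime p d := (hp.coprime_iff_not_dvd).2 hpd
          exact Nat.coprime_comm.1 this
        have : g^[1] a = a := by rw [← hco]; exact pg
        exact hna (by simpa using this)
      have hnofix : ∀ b ∈ O, g b ≠ b := by
        intro b hb hbfix
        obtain ⟨k, hk, rfl⟩ := Finset.mem_image.1 hb
        rw [Finset.mem_range] at hk
        have hfixiter : ∀ j, g^[j] (g^[k] a) = g^[k] a := fun j => Function.iterate_fixed hbfix j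
        have h2 : g^[p - k] (g^[k] a) = a := by
          rw [← Function.iterate_add_apply, Nat.sub_add_cancel hk.le, hg]; rfl
        have hak : a = g^[k] a := h2.symm.trans (hfixiter (p - k))
        exact hna ((congrArg g hak).trans (hbfix.trans hak.symm))
      have hcardO : O.card = p := by
        rw [hO, Finset.card_image_of_injOn, Finset.card_range]
        have core : ∀ i j, i ≤ j → j < p → g^[i] a = g^[j] a → i = j := by
          intro i j hij hjp he
          have : g^[j] a = g^[i] (g^[j - i] a) := by
            rw [← Function.iterate_add_apply, Nat.add_sub_cancel' hij]
          rw [this] at he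
          have hd : g^[j - i] a = a := ((hginj.iterate i) he).symm
          have := hperiod (j - i) (lt_of_le_of_lt (Nat.sub_le j i) hjp) hd
          omega
        intro i hi j hj hij
        simp only [Finset.coe_range, Set.mem_Iio] at hi hj
        rcases le_total i j with hle | hle
        · exact core i j hle hj hij
        · exact (core j i hle hi hij.symm).symm
      have hOg : ∀ c ∈ O, g c ∈ O := by
        intro c hc
        obtain ⟨k, hk, rfl⟩ := Finset.mem_image.1 hc
        rw [Finset.mem_range] at hk
        rcases Nat.lt_or_ge (k + 1) p with hlt | hge
        · exact Finset.mem_image.2 ⟨k + 1, Finset.mem_range.2 hlt,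
            Function.iterate_succ_apply' g k a⟩
        · have hkp : k + 1 = p := le_antisymm hk hge
          have hrw : g (g^[k] a) = g^[k + 1] a := (Function.iterate_succ_apply' g k a).symm
          rw [hrw, hkp, hg]
          exact haO
      have hOiter : ∀ j, ∀ c ∈ O, g^[j] c ∈ O := by
        intro j
        induction j with
        | zero => exact fun c hc => hc
        | succ j ihj =>
          intro c hc
          rw [Function.iterate_succ_apply']
          exact hOg _ (ihj c hc)
      have hclosed' : ∀ b ∈ s \ O, g b ∈ s \ O := by
        intro b hb
        rw [Finset.mem_sdiff] at hb ⊢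
        refine ⟨hs b hb.1, fun hgb => hb.2 ?_⟩
        have hb' : b = g^[p - 1] (g b) := by
          have h1 : g^[(p - 1) + 1] b = g^[p - 1] (g b) := Function.iterate_succ_apply g (p - 1) b
          rw [Nat.sub_add_cancel hp.pos, hg] at h1
          exact h1
        rw [hb']
        exact hOiter (p - 1) _ hgb
      have hsplit : (∑ b ∈ s, f b) = (∑ b ∈ s \ O, f b) + ∑ b ∈ O, f b :=
        (Finset.sum_sdiff hOs).symm
      have hOsum : (∑ b ∈ O, f b) = p * f a := by
        rw [Finset.sum_congr rfl hfO, Finset.sum_const, hcardO, smul_eq_mul]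
      have hss : s \ O ⊂ s := Finset.sdiff_ssubset hOs ⟨a, haO⟩
      have ihs := ih (s \ O) hss hclosed'
      have hfil : s.filter (fun a => g a = a) = (s \ O).filter (fun a => g a = a) := by
        ext b
        simp only [Finset.mem_filter, Finset.mem_sdiff]
        constructor
        · rintro ⟨hbs, hfix⟩
          exact ⟨⟨hbs, fun hbO => hnofix b hbO hfix⟩, hfix⟩
        · rintro ⟨⟨hbs, _⟩, hfix⟩
          exact ⟨hbs, hfix⟩
      rw [hsplit, hOsum, hfil]
      calc (∑ b ∈ s \ O, f b) + p * f a
          ≡ (∑ b ∈ s \ O, f b) + 0 [MOD p] :=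
            Nat.ModEq.add_left _ ((Nat.modEq_zero_iff_dvd).2 (Dvd.intro _ rfl))
        _ = ∑ b ∈ s \ O, f b := add_zero _
        _ ≡ ∑ b ∈ (s \ O).filter (fun a => g a = a), f b [MOD p] := ihs

end OrbitSum

section Aux

variable {G : Type*} [Group G] [Fintype G] [DecidableEq G]

noncomputable def classFinset (D : ConjClasses G) : Finset G :=
  Finset.univ.image fun u => u * Quotient.out D * u⁻¹

lemma mem_classFinset {D : ConjClasses G} {x : G} : x ∈ classFinset D ↔ x ∈ D.carrier := by
  have hD : ConjClasses.mk (Quotient.out D) = D := by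
    exact Quotient.out_eq D
  simp only [classFinset, Finset.mem_image, Finset.mem_univ, true_and,
    ConjClasses.mem_carrier_iff_mk_eq, ← isConj_iff, ← ConjClasses.mk_eq_mk_iff_isConj, hD]
  exact eq_comm

lemma conj_mem_classFinset {D : ConjClasses G} {x : G} (u : G) (hx : x ∈ classFinset D) :
    u * x * u⁻¹ ∈ classFinset D := by
  rw [mem_classFinset, ConjClasses.mem_carrier_iff_mk_eq] at *
  rw [← hx, ConjClasses.mk_eq_mk_iff_isConj]
  exact (isConj_iff.2 ⟨u, rfl⟩).symm

lemma conj_ofFn_prod (u : G) {n : ℕ} (t : Fin n → G) :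
    (List.ofFn fun i => u * t i * u⁻¹).prod = u * (List.ofFn t).prod * u⁻¹ := by
  have := map_list_prod (MulAut.conj u).toMonoidHom (List.ofFn t)
  simpa [List.map_ofFn, Function.comp_def, MulAut.conj_apply] using this.symm

noncomputable def cntF {n : ℕ} (Ds : Fin n → ConjClasses G) (x : G) : ℕ :=
  (Finset.univ.filter fun t : Fin n → G =>
    (∀ i, t i ∈ classFinset (Ds i)) ∧ (List.ofFn t).prod = x).card

lemma cntF_conj {n : ℕ} (Ds : Fin n → ConjClasses G) (x u : G) :
    cntF Ds (u * x * u⁻¹) = cntF Ds x := by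
  classical
  unfold cntF
  apply Finset.card_bij' (fun t _ => fun i => u⁻¹ * t i * u⁻¹⁻¹) (fun t _ => fun i => u * t i * u⁻¹)
  · intro t ht
    simp only [Finset.mem_filter, Finset.mem_univ, true_and] at ht ⊢
    obtain ⟨h1, h2⟩ := ht
    constructor
    · intro i
      simpa using conj_mem_classFinset u⁻¹ (h1 i)
    · rw [conj_ofFn_prod, h2]
      group
  · intro t ht
    simp only [Finset.mem_filter, Finset.mem_univ, true_and] at ht ⊢
    obtain ⟨h1, h2⟩ := ht
    exact ⟨fun i => conj_mem_classFinset u (h1 i), by rw [conj_ofFn_prod, h2]⟩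
  · intro t _; funext i; group
  · intro t _; funext i; group

lemma cntF_eq_of_mem_class {n : ℕ} (Ds : Fin n → ConjClasses G) {x h : G}
    (hx : x ∈ classFinset (ConjClasses.mk h)) : cntF Ds x = cntF Ds h := by
  rw [mem_classFinset, ConjClasses.mem_carrier_iff_mk_eq, ConjClasses.mk_eq_mk_iff_isConj] at hx
  obtain ⟨u, hu⟩ := isConj_iff.1 hx.symm
  rw [← hu, cntF_conj]

lemma card_classFinset_dvd (g : G) : (classFinset (ConjClasses.mk g)).card ∣ Fintype.card G := by
  classical
  have h1 : classFinset (ConjClasses.mk g) = (ConjClasses.mk g).carrier.toFinset := by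
    ext x
    rw [mem_classFinset, Set.mem_toFinset]
  have h2 : (ConjClasses.mk g).carrier.toFinset.card = Fintype.card (ConjClasses.mk g).carrier :=
    (Set.toFinset_card _)
  have key := MulAction.card_orbit_mul_card_stabilizer_eq_card_group (ConjAct G) g
  have horb : Fintype.card (MulAction.orbit (ConjAct G) g) =
      Fintype.card ((ConjClasses.mk g).carrier) :=
    Fintype.card_congr (Equiv.setCongr (ConjAct.orbit_eq_carrier_conjClasses g))
  refine ⟨Fintype.card (MulAction.stabilizer (ConjAct G) g), ?_⟩
  rw [h1, h2, ← horb]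
  exact (key.trans (Fintype.card_congr (ConjAct.ofConjAct (G := G)).toEquiv)).symm

end Aux

section Alg

variable {G : Type*} [Group G] [Fintype G] [DecidableEq G] (p : ℕ)

noncomputable def csum (D : ConjClasses G) : MonoidAlgebra (ZMod p) G :=
  ∑ g ∈ classFinset D, MonoidAlgebra.single g 1

lemma csum_apply (D : ConjClasses G) (x : G) :
    (csum p D).coeff x = if x ∈ classFinset D then 1 else 0 := by
  classical
  rw [csum, MonoidAlgebra.coeff_sum, Finset.sum_apply']
  simp_rw [MonoidAlgebra.coeff_single, Finsupp.single_apply]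
  exact Finset.sum_ite_eq' (classFinset D) x (fun _ => (1 : ZMod p))

lemma csum_mem_center (D : ConjClasses G) :
    csum p D ∈ Subsemiring.center (MonoidAlgebra (ZMod p) G) := by
  rw [Subsemiring.mem_center_iff]
  have key : ∀ (g : G) (r : ZMod p),
      MonoidAlgebra.single g r * csum p D = csum p D * MonoidAlgebra.single g r := by
    intro g r
    rw [csum, Finset.mul_sum, Finset.sum_mul]
    refine Finset.sum_nbij' (fun h => g * h * g⁻¹) (fun h => g⁻¹ * h * g⁻¹⁻¹) ?_ ?_ ?_ ?_ ?_
    · intro h hh; exact conj_mem_classFinset g hh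
    · intro h hh; exact conj_mem_classFinset g⁻¹ hh
    · intro h _; group
    · intro h _; group
    · intro h _
      rw [MonoidAlgebra.single_mul_single, MonoidAlgebra.single_mul_single]
      congr 1
      · group
      · exact (mul_one r).trans (one_mul r).symm
  intro f
  have hf : f = f.coeff.sum (fun a b => MonoidAlgebra.single a b) := (MonoidAlgebra.sum_coeff_single f).symm
  rw [hf, Finsupp.sum, Finset.sum_mul, Finset.mul_sum]
  exact Finset.sum_congr rfl fun a _ => key a (f.coeff a)

lemma prod_apply_eq {n : ℕ} (zs : Fin n → MonoidAlgebra (ZMod p) G) (x : G) :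
    (List.ofFn zs).prod.coeff x =
      ∑ r : Fin n → G, if (List.ofFn r).prod = x then ∏ j, (zs j).coeff (r j) else 0 := by
  classical
  induction n generalizing x with
  | zero =>
    simp only [List.ofFn_zero, List.prod_nil, MonoidAlgebra.one_def, MonoidAlgebra.coeff_single_apply,
      Fin.prod_univ_zero]
    rw [Finset.sum_const, Finset.card_univ, Fintype.card_unique, one_smul]
  | succ n ih =>
    rw [List.ofFn_succ, List.prod_cons, MonoidAlgebra.coeff_mul_apply_left,
      Finsupp.sum_fintype _ _ (by intro a; simp)]
    simp_rw [ih, Finset.mul_sum, mul_ite, mul_zero]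
    have e1 : (∑ r : Fin (n+1) → G, if (List.ofFn r).prod = x then ∏ j, (zs j).coeff (r j) else 0)
        = ∑ q : G × (Fin n → G), (if q.1 * (List.ofFn q.2).prod = x
            then (zs 0).coeff q.1 * ∏ j : Fin n, (zs j.succ).coeff (q.2 j) else 0) := by
      refine Fintype.sum_equiv ((Fin.consEquiv fun _ => G).symm) _ _ ?_
      intro r
      rw [Fin.prod_univ_succ]
      have hprod : (List.ofFn r).prod = r 0 * (List.ofFn fun i => r i.succ).prod := by
        rw [List.ofFn_succ, List.prod_cons]
      rw [hprod]
      rfl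
    rw [e1, Fintype.sum_prod_type]
    refine Finset.sum_congr rfl fun a _ => Finset.sum_congr rfl fun t _ => ?_
    by_cases hc : a * (List.ofFn t).prod = x
    · rw [if_pos hc, if_pos (eq_inv_mul_iff_mul_eq.2 hc)]
    · rw [if_neg hc, if_neg (fun hh => hc (eq_inv_mul_iff_mul_eq.1 hh))]

noncomputable def CSum (D : ConjClasses G) :
    Subsemiring.center (MonoidAlgebra (ZMod p) G) := ⟨csum p D, csum_mem_center p D⟩

lemma coe_prod_CSum {n : ℕ} (Ds : Fin n → ConjClasses G) :
    ((∏ i, CSum p (Ds i) : Subsemiring.center (MonoidAlgebra (ZMod p) G)) :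
        MonoidAlgebra (ZMod p) G) = (List.ofFn fun i => csum p (Ds i)).prod := by
  rw [← List.prod_ofFn]
  exact (map_list_prod (SubsemiringClass.subtype
    (Subsemiring.center (MonoidAlgebra (ZMod p) G))) _).trans (by rw [List.map_ofFn]; rfl)

lemma prod_CSum_apply {n : ℕ} (Ds : Fin n → ConjClasses G) (x : G) :
    ((∏ i, CSum p (Ds i) : Subsemiring.center (MonoidAlgebra (ZMod p) G)) :
        MonoidAlgebra (ZMod p) G).coeff x = (cntF Ds x : ZMod p) := by
  classical
  rw [coe_prod_CSum, prod_apply_eq]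
  have hterm : ∀ r : Fin n → G, (∏ j, (csum p (Ds j)).coeff (r j))
      = if (∀ i, r i ∈ classFinset (Ds i)) then (1 : ZMod p) else 0 := by
    intro r
    simp_rw [csum_apply]
    rw [Finset.prod_boole]
    simp
  simp_rw [hterm]
  rw [cntF, Finset.card_filter]
  push_cast
  refine Finset.sum_congr rfl fun r _ => ?_
  by_cases h1 : (List.ofFn r).prod = x <;>
    by_cases h2 : ∀ i, r i ∈ classFinset (Ds i) <;> simp [h1, h2]

end Alg

section Rot

variable {G : Type*} [Group G] [Fintype G] [DecidableEq G]

lemma prod_rotate_conj (l : List G) {n : ℕ} (hn : n ≤ l.length) :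
    (l.rotate n).prod = (l.take n).prod⁻¹ * l.prod * (l.take n).prod := by
  rw [List.rotate_eq_drop_append_take hn, List.prod_append]
  have h1 : l.prod = (l.take n).prod * (l.drop n).prod := by
    rw [← List.prod_append, List.take_append_drop]
  rw [h1]
  group

variable (p : ℕ) [NeZero p]

open Fin.NatCast

def rot (r : Fin p → G) : Fin p → G := fun j => r (j + 1)

lemma rot_iterate (k : ℕ) (r : Fin p → G) : (rot p)^[k] r = fun j => r (j + (k : Fin p)) := by
  induction k with
  | zero => simp
  | succ k ih =>
    rw [Function.iterate_succ_apply', ih]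
    funext j
    show r ((j + 1) + (k : Fin p)) = r (j + ((k : ℕ) + 1 : ℕ))
    push_cast
    rw [add_assoc, add_comm (1 : Fin p) _]

lemma rot_pow_eq_id : (rot p (G := G))^[p] = id := by
  funext r
  rw [rot_iterate]
  funext j
  rw [Fin.natCast_self, add_zero]
  rfl

lemma rot_fixed_iff (r : Fin p → G) : rot p r = r ↔ ∃ y, r = fun _ => y := by
  constructor
  · intro hr
    refine ⟨r 0, ?_⟩
    have hstep : ∀ j, r (j + 1) = r j := fun j => congrFun hr j
    have hnat : ∀ k : ℕ, r ((k : Fin p)) = r 0 := by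
      intro k
      induction k with
      | zero => simp
      | succ k ih =>
        push_cast
        rw [hstep ((k : Fin p))]
        exact ih
    funext j
    rw [← Fin.cast_val_eq_self j, hnat j.val]
  · rintro ⟨y, rfl⟩
    funext j
    rfl

lemma rot_ofFn_eq_rotate (r : Fin p → G) :
    List.ofFn (rot p r) = (List.ofFn r).rotate 1 := by
  apply List.ext_get
  · simp
  intro i h1 h2
  rw [List.get_ofFn, List.get_rotate, List.get_ofFn]
  show r (Fin.cast _ ⟨i, h1⟩ + 1) = _
  congr 1
  have hi : i < p := by simpa using h1
  apply Fin.ext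
  simp only [Fin.coe_cast, Fin.val_add, Fin.val_one', List.length_ofFn]
  rw [Nat.add_mod i 1 p, Nat.mod_eq_of_lt hi]

end Rot

section PowClass

variable {G : Type*} [Group G] [Fintype G] [DecidableEq G]

lemma conj_pow_eq (u a : G) (k : ℕ) : (u * a * u⁻¹) ^ k = u * a ^ k * u⁻¹ := by
  have := map_pow (MulAut.conj u) a k
  simpa [MulAut.conj_apply] using this.symm

lemma pow_mem_classFinset_iff {k : ℕ} (hk : Nat.Coprime (Nat.card G) k) (y h : G) :
    y ^ k ∈ classFinset (ConjClasses.mk (h ^ k)) ↔ y ∈ classFinset (ConjClasses.mk h) := by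
  have hinj : Function.Injective (fun y : G => y ^ k) := by
    intro a b hab
    apply (powCoprime hk).injective
    rwa [powCoprime_apply, powCoprime_apply]
  rw [mem_classFinset, mem_classFinset, ConjClasses.mem_carrier_iff_mk_eq,
    ConjClasses.mem_carrier_iff_mk_eq, ConjClasses.mk_eq_mk_iff_isConj,
    ConjClasses.mk_eq_mk_iff_isConj]
  constructor
  · intro hc
    obtain ⟨u, hu⟩ := isConj_iff.1 hc.symm
    rw [← conj_pow_eq] at hu
    have : u * h * u⁻¹ = y := hinj hu
    exact (isConj_iff.2 ⟨u, this⟩).symm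
  · intro hc
    obtain ⟨u, hu⟩ := isConj_iff.1 hc.symm
    refine (isConj_iff.2 ⟨u, ?_⟩).symm
    rw [← conj_pow_eq, hu]

lemma card_classFinset_pow {k : ℕ} (hk : Nat.Coprime (Nat.card G) k) (h : G) :
    (classFinset (ConjClasses.mk (h ^ k))).card = (classFinset (ConjClasses.mk h)).card := by
  classical
  have hinj : Function.Injective (fun y : G => y ^ k) := by
    intro a b hab
    apply (powCoprime hk).injective
    rwa [powCoprime_apply, powCoprime_apply]
  symm
  apply Finset.card_bij (fun y _ => y ^ k)
  · intro y hy
    exact (pow_mem_classFinset_iff hk y h).2 hy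
  · intro a _ b _ hab
    exact hinj hab
  · intro x hx
    have hxx : ((powCoprime hk).symm x) ^ k = x := by
      have h5 := (powCoprime hk).apply_symm_apply x
      rwa [powCoprime_apply] at h5
    refine ⟨(powCoprime hk).symm x, ?_, hxx⟩
    rw [← pow_mem_classFinset_iff hk _ h, hxx]
    exact hx

noncomputable def powC (D : ConjClasses G) (k : ℕ) : ConjClasses G :=
  ConjClasses.mk ((Quotient.out D) ^ k)

lemma classFinset_mk_out (D : ConjClasses G) :
    classFinset (ConjClasses.mk (Quotient.out D)) = classFinset D := by
  have hD : ConjClasses.mk (Quotient.out D) = D := by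
    exact Quotient.out_eq D
  rw [hD]

lemma pow_mem_powC_iff {k : ℕ} (hk : Nat.Coprime (Nat.card G) k) (y : G) (D : ConjClasses G) :
    y ^ k ∈ classFinset (powC D k) ↔ y ∈ classFinset D := by
  rw [powC, pow_mem_classFinset_iff hk, classFinset_mk_out]

end PowClass

section Key

variable {G : Type*} [Group G] [Fintype G] [DecidableEq G] (p : ℕ) [Fact p.Prime]

lemma central_apply_conj {z : MonoidAlgebra (ZMod p) G}
    (hz : z ∈ Subsemiring.center (MonoidAlgebra (ZMod p) G)) (u x : G) :
    z.coeff (u * x * u⁻¹) = z.coeff x := by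
  have hc := (Subsemiring.mem_center_iff.1 hz) (MonoidAlgebra.single u 1)
  have h1 : (MonoidAlgebra.single u (1 : ZMod p) * z).coeff (u * x) = z.coeff x := by
    rw [MonoidAlgebra.coeff_single_mul_apply]
    simp [inv_mul_cancel_left]
  have h2 : (z * MonoidAlgebra.single u (1 : ZMod p)).coeff (u * x) = z.coeff (u * x * u⁻¹) := by
    rw [MonoidAlgebra.coeff_mul_single_apply]
    simp
  rw [← h2, ← hc, h1]

lemma coprime_of_not_dvd (hpG : ¬ p ∣ Fintype.card G) : Nat.Coprime (Nat.card G) p := by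
  have hp : p.Prime := Fact.out
  rw [Nat.card_eq_fintype_card]
  exact Nat.coprime_comm.1 ((hp.coprime_iff_not_dvd).2 hpG)

lemma key_sum (hpG : ¬ p ∣ Fintype.card G) {n : ℕ} (Ds : Fin n → ConjClasses G) (h : G) :
    ∑ x ∈ classFinset (ConjClasses.mk (h ^ p)),
      ((((∏ i, CSum p (Ds i)) ^ p :
          Subsemiring.center (MonoidAlgebra (ZMod p) G)) : MonoidAlgebra (ZMod p) G).coeff x)
    = (((classFinset (ConjClasses.mk h)).card * cntF Ds h : ℕ) : ZMod p) := by
  classical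
  have hp : p.Prime := Fact.out
  haveI : NeZero p := ⟨hp.ne_zero⟩
  set w := (∏ i, CSum p (Ds i)) with hw
  have hcoe : ((w ^ p : Subsemiring.center (MonoidAlgebra (ZMod p) G)) :
      MonoidAlgebra (ZMod p) G)
      = (List.ofFn fun _ : Fin p => (w : MonoidAlgebra (ZMod p) G)).prod := by
    rw [List.ofFn_const, List.prod_replicate, SubmonoidClass.coe_pow]
  have hcoeff : ∀ x : G, ((w ^ p : Subsemiring.center (MonoidAlgebra (ZMod p) G)) :
      MonoidAlgebra (ZMod p) G).coeff x
      = ∑ r : Fin p → G, if (List.ofFn r).prod = x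
          then ((∏ j : Fin p, cntF Ds (r j) : ℕ) : ZMod p) else 0 := by
    intro x
    rw [hcoe, prod_apply_eq]
    refine Finset.sum_congr rfl fun r _ => ?_
    congr 1
    push_cast
    exact Finset.prod_congr rfl fun j _ => (prod_CSum_apply p Ds (r j))
  set E := classFinset (ConjClasses.mk (h ^ p)) with hE
  set fN : (Fin p → G) → ℕ :=
    fun r => if (List.ofFn r).prod ∈ E then (∏ j : Fin p, cntF Ds (r j)) else 0 with hfN
  have hcast : ∑ x ∈ E, ((w ^ p : Subsemiring.center (MonoidAlgebra (ZMod p) G)) :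
      MonoidAlgebra (ZMod p) G).coeff x = ((∑ r : Fin p → G, fN r : ℕ) : ZMod p) := by
    simp_rw [hcoeff]
    rw [Finset.sum_comm, Nat.cast_sum]
    refine Finset.sum_congr rfl fun r _ => ?_
    rw [Finset.sum_ite_eq E ((List.ofFn r).prod)
      (fun _ => ((∏ j : Fin p, cntF Ds (r j) : ℕ) : ZMod p))]
    rw [hfN, apply_ite (fun z : ℕ => (z : ZMod p)), Nat.cast_prod, Nat.cast_zero]
  have hinv : ∀ r : Fin p → G, fN (rot p r) = fN r := by
    intro r
    have hlen : (1 : ℕ) ≤ (List.ofFn r).length := by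
      simp only [List.length_ofFn]
      exact hp.pos
    have hprodrot : (List.ofFn (rot p r)).prod
        = ((List.ofFn r).take 1).prod⁻¹ * (List.ofFn r).prod * ((List.ofFn r).take 1).prod := by
      rw [rot_ofFn_eq_rotate, prod_rotate_conj _ hlen]
    have hmem : ((List.ofFn (rot p r)).prod ∈ E) ↔ ((List.ofFn r).prod ∈ E) := by
      rw [hprodrot]
      set u := ((List.ofFn r).take 1).prod with hu
      constructor
      · intro hmemu
        have h3 := conj_mem_classFinset u hmemu
        have h4 : u * (u⁻¹ * (List.ofFn r).prod * u) * u⁻¹ = (List.ofFn r).prod := by group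
        rwa [h4] at h3
      · intro hmemu
        have h3 := conj_mem_classFinset u⁻¹ hmemu
        have h4 : u⁻¹ * (List.ofFn r).prod * u⁻¹⁻¹ = u⁻¹ * (List.ofFn r).prod * u := by group
        rwa [h4] at h3
    have hweight : (∏ j : Fin p, cntF Ds (rot p r j)) = ∏ j : Fin p, cntF Ds (r j) :=
      Equiv.prod_comp (Equiv.addRight (1 : Fin p)) (fun j => cntF Ds (r j))
    rw [hfN]
    simp only []
    rw [hweight]
    exact if_congr hmem rfl rfl
  have hmodeq := sum_iterate_modEq hp (rot p) (rot_pow_eq_id p) fN hinv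
  have hfix : (∑ r ∈ Finset.univ.filter (fun r : Fin p → G => rot p r = r), fN r)
      = (classFinset (ConjClasses.mk h)).card * cntF Ds h ^ p := by
    have hbij : (∑ r ∈ Finset.univ.filter (fun r : Fin p → G => rot p r = r), fN r)
        = ∑ y : G, fN (fun _ => y) := by
      refine Finset.sum_nbij' (fun r => r 0) (fun y => fun _ => y) ?_ ?_ ?_ ?_ ?_
      · intro r _; exact Finset.mem_univ _
      · intro y _
        rw [Finset.mem_filter]
        exact ⟨Finset.mem_univ _, (rot_fixed_iff p _).2 ⟨y, rfl⟩⟩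
      · intro r hr
        rw [Finset.mem_filter] at hr
        obtain ⟨y, rfl⟩ := (rot_fixed_iff p _).1 hr.2
        rfl
      · intro y _; rfl
      · intro r hr
        rw [Finset.mem_filter] at hr
        obtain ⟨y, rfl⟩ := (rot_fixed_iff p _).1 hr.2
        rfl
    rw [hbij]
    have hconst : ∀ y : G, fN (fun _ => y)
        = if y ∈ classFinset (ConjClasses.mk h) then cntF Ds h ^ p else 0 := by
      intro y
      have hprodc : (List.ofFn fun _ : Fin p => y).prod = y ^ p := by
        rw [List.ofFn_const, List.prod_replicate]
      have hprodw : (∏ _j : Fin p, cntF Ds y) = cntF Ds y ^ p := by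
        rw [Finset.prod_const, Finset.card_univ, Fintype.card_fin]
      have hcond : (y ^ p ∈ E) ↔ (y ∈ classFinset (ConjClasses.mk h)) := by
        rw [hE]
        exact pow_mem_classFinset_iff (coprime_of_not_dvd p hpG) y h
      show (if (List.ofFn fun _ : Fin p => y).prod ∈ E
          then (∏ _j : Fin p, cntF Ds y) else 0) = _
      rw [hprodc, hprodw]
      by_cases hy : y ∈ classFinset (ConjClasses.mk h)
      · rw [if_pos (hcond.2 hy), if_pos hy, cntF_eq_of_mem_class Ds hy]
      · rw [if_neg (fun hh => hy (hcond.1 hh)), if_neg hy]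
    simp_rw [hconst]
    rw [← Finset.sum_filter]
    have huniv : Finset.univ.filter (fun y : G => y ∈ classFinset (ConjClasses.mk h))
        = classFinset (ConjClasses.mk h) := by
      ext y; simp
    rw [huniv, Finset.sum_const, smul_eq_mul]
  rw [hcast]
  have := (ZMod.natCast_eq_natCast_iff _ _ _).2 hmodeq
  rw [this, hfix]
  push_cast
  rw [ZMod.pow_card]

end Key

section Main

variable {G : Type*} [Group G] [Fintype G] [DecidableEq G] (p : ℕ) [Fact p.Prime]

lemma card_class_ne_zero (hpG : ¬ p ∣ Fintype.card G) (h : G) :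
    (((classFinset (ConjClasses.mk h)).card : ZMod p)) ≠ 0 := by
  rw [Ne, ZMod.natCast_eq_zero_iff]
  intro hdvd
  exact hpG (hdvd.trans (card_classFinset_dvd h))

lemma coeff_pow_eq (hpG : ¬ p ∣ Fintype.card G) {n : ℕ} (Ds : Fin n → ConjClasses G) (h : G) :
    (((∏ i, CSum p (Ds i)) ^ p : Subsemiring.center (MonoidAlgebra (ZMod p) G)) :
      MonoidAlgebra (ZMod p) G).coeff (h ^ p) = (cntF Ds h : ZMod p) := by
  classical
  have hkey := key_sum p hpG Ds h
  set z := (((∏ i, CSum p (Ds i)) ^ p : Subsemiring.center (MonoidAlgebra (ZMod p) G)) :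
    MonoidAlgebra (ZMod p) G) with hz
  have hzc : z ∈ Subsemiring.center (MonoidAlgebra (ZMod p) G) :=
    ((∏ i, CSum p (Ds i)) ^ p).2
  have hconst : ∀ x ∈ classFinset (ConjClasses.mk (h ^ p)), z.coeff x = z.coeff (h ^ p) := by
    intro x hx
    rw [mem_classFinset, ConjClasses.mem_carrier_iff_mk_eq,
      ConjClasses.mk_eq_mk_iff_isConj] at hx
    obtain ⟨u, hu⟩ := isConj_iff.1 hx.symm
    rw [← hu]
    exact central_apply_conj p hzc u (h ^ p)
  rw [Finset.sum_congr rfl hconst, Finset.sum_const, nsmul_eq_mul,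
    card_classFinset_pow (coprime_of_not_dvd p hpG) h] at hkey
  push_cast at hkey
  exact mul_left_cancel₀ (card_class_ne_zero p hpG h) hkey

lemma cntF_single (D : ConjClasses G) (y : G) :
    cntF (fun _ : Fin 1 => D) y = if y ∈ classFinset D then 1 else 0 := by
  classical
  rw [cntF]
  have hset : (Finset.univ.filter fun t : Fin 1 → G =>
      (∀ i, t i ∈ classFinset D) ∧ (List.ofFn t).prod = y)
      = if y ∈ classFinset D then {fun _ => y} else ∅ := by
    ext t
    have hprod : (List.ofFn t).prod = t 0 := by
      simp [List.ofFn_succ]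
    by_cases hy : y ∈ classFinset D
    · rw [if_pos hy]
      simp only [Finset.mem_filter, Finset.mem_univ, true_and, Finset.mem_singleton, hprod]
      constructor
      · rintro ⟨hmem, rfl⟩
        funext i
        have : i = 0 := Subsingleton.elim i 0
        rw [this]
      · rintro rfl
        exact ⟨fun i => hy, rfl⟩
    · rw [if_neg hy]
      simp only [Finset.mem_filter, Finset.mem_univ, true_and, Finset.notMem_empty,
        iff_false, not_and, hprod]
      rintro hmem rfl
      exact hy (hmem 0)
  rw [hset]
  split_ifs <;> simp

lemma CSum_pow (hpG : ¬ p ∣ Fintype.card G) (D : ConjClasses G) :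
    (CSum p D) ^ p = CSum p (powC D p) := by
  classical
  have hco := coprime_of_not_dvd p hpG
  apply Subtype.ext
  apply MonoidAlgebra.ext
  apply Finsupp.ext
  intro x
  have hx : ∃ y : G, y ^ p = x := by
    refine ⟨(powCoprime hco).symm x, ?_⟩
    have h5 := (powCoprime hco).apply_symm_apply x
    rwa [powCoprime_apply] at h5
  obtain ⟨y, rfl⟩ := hx
  have h1 : (((CSum p D) ^ p : Subsemiring.center (MonoidAlgebra (ZMod p) G)) :
      MonoidAlgebra (ZMod p) G).coeff (y ^ p) = (cntF (fun _ : Fin 1 => D) y : ZMod p) := by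
    have h2 := coeff_pow_eq p hpG (fun _ : Fin 1 => D) y
    rwa [Fin.prod_univ_one] at h2
  have h3 : ((CSum p (powC D p) : Subsemiring.center (MonoidAlgebra (ZMod p) G)) :
      MonoidAlgebra (ZMod p) G).coeff (y ^ p) = (cntF (fun _ : Fin 1 => D) y : ZMod p) := by
    show (csum p (powC D p)).coeff (y ^ p) = _
    rw [csum_apply, cntF_single]
    by_cases hy : y ∈ classFinset D
    · rw [if_pos ((pow_mem_powC_iff hco y D).2 hy), if_pos hy, Nat.cast_one]
    · rw [if_neg (fun hh => hy ((pow_mem_powC_iff hco y D).1 hh)), if_neg hy, Nat.cast_zero]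
  exact h1.trans h3.symm

lemma main_cong (hpG : ¬ p ∣ Fintype.card G) {n : ℕ} (Cs : Fin n → ConjClasses G) (h : G) :
    cntF Cs h ≡ cntF (fun i => powC (Cs i) p) (h ^ p) [MOD p] := by
  classical
  have h1 : (cntF Cs h : ZMod p)
      = (((∏ i, CSum p (Cs i)) ^ p : Subsemiring.center (MonoidAlgebra (ZMod p) G)) :
          MonoidAlgebra (ZMod p) G).coeff (h ^ p) := (coeff_pow_eq p hpG Cs h).symm
  have h2 : ((∏ i, CSum p (Cs i)) ^ p : Subsemiring.center (MonoidAlgebra (ZMod p) G))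
      = ∏ i, CSum p (powC (Cs i) p) := by
    rw [← Finset.prod_pow]
    exact Finset.prod_congr rfl fun i _ => CSum_pow p hpG (Cs i)
  rw [h2, prod_CSum_apply] at h1
  exact (ZMod.natCast_eq_natCast_iff _ _ _).1 h1

end Main

section End

variable {G : Type*} [Group G] [Fintype G] [DecidableEq G]

lemma carrier_powC (D : ConjClasses G) (k : ℕ) :
    (fun x : G => x ^ k) '' D.carrier = (powC D k).carrier := by
  have hout : ConjClasses.mk (Quotient.out D) = D := by
    exact Quotient.out_eq D
  ext x
  constructor
  · rintro ⟨y, hy, rfl⟩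
    rw [ConjClasses.mem_carrier_iff_mk_eq] at hy
    rw [ConjClasses.mem_carrier_iff_mk_eq, powC, ConjClasses.mk_eq_mk_iff_isConj]
    have h2 : IsConj y (Quotient.out D) := by
      rw [← ConjClasses.mk_eq_mk_iff_isConj, hy, hout]
    obtain ⟨u, hu⟩ := isConj_iff.1 h2
    exact isConj_iff.2 ⟨u, by rw [← conj_pow_eq, hu]⟩
  · intro hx
    rw [ConjClasses.mem_carrier_iff_mk_eq, powC, ConjClasses.mk_eq_mk_iff_isConj] at hx
    obtain ⟨u, hu⟩ := isConj_iff.1 hx.symm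
    refine ⟨u * Quotient.out D * u⁻¹, ?_, by
      show (u * Quotient.out D * u⁻¹) ^ k = x
      rw [conj_pow_eq, hu]⟩
    rw [ConjClasses.mem_carrier_iff_mk_eq]
    have : ConjClasses.mk (u * Quotient.out D * u⁻¹) = ConjClasses.mk (Quotient.out D) :=
      ConjClasses.mk_eq_mk_iff_isConj.2 ((isConj_iff.2 ⟨u, rfl⟩).symm)
    rw [this, hout]

lemma natCard_eq_cntF {n : ℕ} (Ds : Fin n → ConjClasses G) (x : G) :
    Nat.card {t : Fin n → G // (∀ i, t i ∈ (Ds i).carrier) ∧ (List.ofFn t).prod = x}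
      = cntF Ds x := by
  classical
  rw [Nat.card_eq_fintype_card, Fintype.card_subtype, cntF]
  congr 1
  apply Finset.filter_congr
  intro t _
  simp [mem_classFinset]

end End

/-- Burnside structure-constant identity: the number of ways to write `h` as a product
of elements of conjugacy classes `C₁, …, C_ℓ` equals the number of ways to write `h^m`
as a product of elements of `C₁^m, …, C_ℓ^m`, for `m` coprime to `|G|`. -/
theorem structure_constants_power_invariance {G : Type*} [Group G] [Finite G]
    (m : ℤ) (hm : IsCoprime m (Nat.card G : ℤ)) (ℓ : ℕ)
    (Cs : Fin ℓ → ConjClasses G) (h : G) :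
    Nat.card {t : Fin ℓ → G // (∀ i, t i ∈ (Cs i).carrier) ∧ (List.ofFn t).prod = h} =
      Nat.card {t : Fin ℓ → G //
        (∀ i, t i ∈ (fun x : G => x ^ m) '' (Cs i).carrier) ∧ (List.ofFn t).prod = h ^ m} := by
  classical
  cases nonempty_fintype G
  set N := Fintype.card G with hN
  have hN0 : 0 < N := Fintype.card_pos
  have hNcard : (Nat.card G) = N := Nat.card_eq_fintype_card
  rw [hNcard] at hm
  set m' : ℕ := (m % (N : ℤ)).toNat with hm'
  have hmZ : ((m' : ℤ)) = m % (N : ℤ) :=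
    Int.toNat_of_nonneg (Int.emod_nonneg m (by exact_mod_cast hN0.ne'))
  have hmm' : ∀ g : G, g ^ m = g ^ m' := by
    intro g
    have hgN : g ^ (N : ℤ) = 1 := by
      rw [zpow_natCast]
      exact pow_card_eq_one
    calc g ^ m = g ^ ((m % (N : ℤ)) + (N : ℤ) * (m / (N : ℤ))) := by
          rw [Int.emod_add_mul_ediv m (N : ℤ)]
      _ = g ^ (m % (N : ℤ)) * (g ^ (N : ℤ)) ^ (m / (N : ℤ)) := by rw [zpow_add, zpow_mul]
      _ = g ^ (m % (N : ℤ)) := by rw [hgN, one_zpow, mul_one]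
      _ = g ^ ((m' : ℤ)) := by rw [hmZ]
      _ = g ^ m' := zpow_natCast g m'
  have hco' : Nat.Coprime m' N := by
    have h1 : IsCoprime ((m' : ℤ)) ((N : ℤ)) := by
      rw [hmZ, Int.emod_def]
      have h2 : m - (N : ℤ) * (m / (N : ℤ)) = m + (N : ℤ) * (-(m / (N : ℤ))) := by ring
      rw [h2]
      exact hm.add_mul_left_left _
    rw [Int.isCoprime_iff_gcd_eq_one, Int.gcd_natCast_natCast] at h1
    exact h1
  haveI : NeZero N := ⟨hN0.ne'⟩
  have hunit : IsUnit ((m' : ℕ) : ZMod N) := (ZMod.isUnit_iff_coprime m' N).2 hco'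
  set B := Fintype.card (Fin ℓ → G) with hB
  obtain ⟨q, hqgt, hqprime, hqmod⟩ := Nat.forall_exists_prime_gt_and_eq_mod hunit B
  haveI : Fact q.Prime := ⟨hqprime⟩
  have hqN : q ≡ m' [MOD N] := (ZMod.natCast_eq_natCast_iff _ _ _).1 hqmod
  have hqdvd : ¬ q ∣ N := by
    intro hdvd
    have h2 : q ≡ m' [MOD q] := hqN.of_dvd hdvd
    have h0 : q ≡ 0 [MOD q] := (Nat.modEq_zero_iff_dvd).2 dvd_rfl
    have h3 : q ∣ m' := (Nat.modEq_zero_iff_dvd).1 (h2.symm.trans h0)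
    have h4 : q ∣ Nat.gcd m' N := Nat.dvd_gcd h3 hdvd
    rw [hco'] at h4
    exact hqprime.one_lt.ne' (Nat.dvd_one.1 h4)
  have hpow : ∀ g : G, g ^ q = g ^ m' := by
    intro g
    rw [pow_eq_pow_iff_modEq]
    exact hqN.of_dvd orderOf_dvd_card
  have hcong := main_cong q hqdvd Cs h
  have hpowC : ∀ D : ConjClasses G, powC D q = powC D m' := by
    intro D
    rw [powC, powC, hpow]
  have hhq : h ^ q = h ^ m' := hpow h
  simp only [hpowC, hhq] at hcong
  have hb1 : cntF Cs h < q :=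
    lt_of_le_of_lt (le_trans (Finset.card_filter_le _ _) (le_of_eq Finset.card_univ)) hqgt
  have hb2 : cntF (fun i => powC (Cs i) m') (h ^ m') < q :=
    lt_of_le_of_lt (le_trans (Finset.card_filter_le _ _) (le_of_eq Finset.card_univ)) hqgt
  have heq : cntF Cs h = cntF (fun i => powC (Cs i) m') (h ^ m') :=
    hcong.eq_of_lt_of_lt hb1 hb2
  have hfun : (fun x : G => x ^ m) = fun x : G => x ^ (m' : ℕ) := funext hmm'
  have hsets : ∀ i, (fun x : G => x ^ m) '' (Cs i).carrier = (powC (Cs i) m').carrier := by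
    intro i
    rw [hfun]
    exact carrier_powC (Cs i) m'
  have hR : Nat.card {t : Fin ℓ → G //
      (∀ i, t i ∈ (fun x : G => x ^ m) '' (Cs i).carrier) ∧ (List.ofFn t).prod = h ^ m}
      = cntF (fun i => powC (Cs i) m') (h ^ m') := by
    rw [← natCard_eq_cntF]
    apply Nat.card_congr
    apply Equiv.subtypeEquivRight
    intro t
    rw [hmm' h]
    simp only [hsets]
  rw [natCard_eq_cntF, hR]
  exact heq
end

section
/- Let G be a finite group and h ∈ G an element expressible as a product h = a₁⋯a_ℓ with a_i ∈ C_i for conjugacy classes C₁,…,C_ℓ. Then for any m coprime to |G|, the power h^m is expressible as a product b₁⋯b_ℓ with b_i ∈ C_i^m, where C_i^m = {g^m : g ∈ C_i}. -/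
set_option linter.unusedSectionVars false

open Finset MonoidAlgebra
open scoped Classical

namespace BurnsideAux

variable {G : Type*} [Group G] [Fintype G] (p : ℕ) [Fact p.Prime]

/-- The conjugacy class of `g` as a `Finset`. -/
noncomputable def cl (g : G) : Finset G := Finset.univ.filter (fun x => IsConj g x)

lemma mem_cl {g x : G} : x ∈ cl g ↔ IsConj g x := by
  simp [cl]

/-- The class sum of `g` in the group algebra. -/
noncomputable def K (g : G) : MonoidAlgebra (ZMod p) G :=
  ∑ x ∈ cl g, MonoidAlgebra.single x 1

lemma cl_eq_cl {g g' : G} (hgg' : IsConj g g') : cl g = cl g' := by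
  ext x; simp only [mem_cl]
  exact ⟨fun hx => hgg'.symm.trans hx, fun hx => hgg'.trans hx⟩

lemma K_apply (g c : G) : (K p g).coeff c = if IsConj g c then 1 else 0 := by
  rw [K, MonoidAlgebra.coeff_sum, Finset.sum_apply']
  simp [MonoidAlgebra.coeff_single, Finsupp.single_apply, Finset.sum_ite_eq, mem_cl]

lemma K_comm (g : G) (f : MonoidAlgebra (ZMod p) G) : Commute (K p g) f := by
  have key : ∀ y : G, (MonoidAlgebra.single y (1 : ZMod p)) * K p g
      = K p g * MonoidAlgebra.single y 1 := by
    intro y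
    rw [K, Finset.mul_sum, Finset.sum_mul]
    rw [Finset.sum_nbij' (i := fun x => y * x * y⁻¹) (j := fun x => y⁻¹ * x * y)]
    · intro x hx; rw [mem_cl] at hx ⊢
      exact hx.trans (isConj_iff.mpr ⟨y, rfl⟩)
    · intro x hx; rw [mem_cl] at hx ⊢
      exact hx.trans (isConj_iff.mpr ⟨y⁻¹, by group⟩)
    · intro x _; group
    · intro x _; group
    · intro x _
      rw [MonoidAlgebra.single_mul_single, MonoidAlgebra.single_mul_single]
      congr 1; group
  induction f using MonoidAlgebra.induction_on with
  | of y => exact (key y).symm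
  | add f g hf hg => exact hf.add_right hg
  | smul r f hf => exact hf.smul_right r

lemma coeff_conj {z : MonoidAlgebra (ZMod p) G} (hz : ∀ f, Commute z f)
    {c c' : G} (hcc' : IsConj c c') : z.coeff c' = z.coeff c := by
  obtain ⟨y, hy⟩ := isConj_iff.mp hcc'
  have h2 : (z * MonoidAlgebra.single y (1 : ZMod p)).coeff (y * c)
      = (MonoidAlgebra.single y (1 : ZMod p) * z).coeff (y * c) := by
    rw [(hz (MonoidAlgebra.single y 1)).eq]
  rw [MonoidAlgebra.mul_single_apply, MonoidAlgebra.single_mul_apply] at h2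
  simpa [← hy, mul_assoc] using h2


/-- Solution set: tuples from the classes of the `a i` with prescribed product. -/
noncomputable def solSet {ℓ : ℕ} (a : Fin ℓ → G) (c : G) : Finset (Fin ℓ → G) :=
  Finset.univ.filter (fun x => (∀ i, IsConj (a i) (x i)) ∧ (List.ofFn x).prod = c)

lemma mem_solSet {ℓ : ℕ} {a x : Fin ℓ → G} {c : G} :
    x ∈ solSet a c ↔ (∀ i, IsConj (a i) (x i)) ∧ (List.ofFn x).prod = c := by
  simp [solSet]

lemma coeff_listProd {ℓ : ℕ} (a : Fin ℓ → G) (c : G) :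
    ((List.ofFn (fun i => K p (a i))).prod).coeff c = ((solSet a c).card : ZMod p) := by
  induction ℓ generalizing c with
  | zero =>
    rw [List.ofFn_zero, List.prod_nil]
    have h1 : solSet a c = if (1 : G) = c then Finset.univ else ∅ := by
      ext x
      rw [mem_solSet]
      have hx : List.ofFn x = [] := List.ofFn_zero
      by_cases hc : (1 : G) = c
      · simp only [if_pos hc, Finset.mem_univ, iff_true]
        exact ⟨fun i => i.elim0, by rw [hx, List.prod_nil]; exact hc⟩
      · simp only [if_neg hc, Finset.notMem_empty, iff_false]
        rintro ⟨-, h2⟩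
        rw [hx, List.prod_nil] at h2
        exact hc h2
    rw [h1, MonoidAlgebra.one_def, MonoidAlgebra.coeff_single, Finsupp.single_apply]
    by_cases hc : (1 : G) = c <;> simp [hc, Finset.card_univ]
  | succ n ih =>
    rw [List.ofFn_succ, List.prod_cons]
    have hK : (K p (a 0) * (List.ofFn fun i => K p (a i.succ)).prod).coeff c
        = ∑ x ∈ cl (a 0),
            ((List.ofFn fun i => K p (a i.succ)).prod).coeff (x⁻¹ * c) := by
      rw [K, Finset.sum_mul, MonoidAlgebra.coeff_sum, Finset.sum_apply']
      refine Finset.sum_congr rfl fun x _ => ?_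
      rw [MonoidAlgebra.single_mul_apply, one_mul]
    rw [hK]
    have hcard : (solSet a c).card
        = ∑ x ∈ cl (a 0), (solSet (fun i => a i.succ) (x⁻¹ * c)).card := by
      rw [Finset.card_eq_sum_card_fiberwise (f := fun x => x 0) (t := cl (a 0))
        (fun x hx => mem_cl.mpr ((mem_solSet.mp hx).1 0))]
      refine Finset.sum_congr rfl fun g hg => ?_
      refine Finset.card_nbij' (i := fun x => fun i => x i.succ)
        (j := fun y => Fin.cons g y) ?_ ?_ ?_ ?_
      · intro x hx
        simp only [Finset.mem_coe, Finset.mem_filter] at hx ⊢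
        obtain ⟨hx1, hx0⟩ := hx
        rw [mem_solSet] at hx1 ⊢
        refine ⟨fun i => hx1.1 i.succ, ?_⟩
        have := hx1.2
        rw [List.ofFn_succ, List.prod_cons, hx0] at this
        rw [← this, inv_mul_cancel_left]
      · intro y hy
        rw [Finset.mem_coe, mem_solSet] at hy
        simp only [Finset.mem_coe, Finset.mem_filter]
        refine ⟨mem_solSet.mpr ⟨?_, ?_⟩, by simp⟩
        · intro i
          refine Fin.cases ?_ ?_ i
          · rw [Fin.cons_zero]; exact mem_cl.mp hg
          · intro j; rw [Fin.cons_succ]; exact hy.1 j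
        · rw [List.ofFn_succ, List.prod_cons, Fin.cons_zero]
          have hfun : (fun i : Fin n => (Fin.cons g y : Fin (n+1) → G) i.succ) = y := by
            funext i; simp
          rw [hfun, hy.2, mul_inv_cancel_left]
      · intro x hx
        simp only [Finset.mem_coe, Finset.mem_filter] at hx
        rw [← hx.2]
        exact Fin.cons_self_tail x
      · intro y hy
        ext i
        simp
    rw [hcard]
    push_cast
    refine Finset.sum_congr rfl fun x _ => ?_
    rw [ih]


lemma ofFn_rotate {q : ℕ} (x : Fin q → G) (k : Fin q) :
    List.ofFn (fun i => x (i + k)) = (List.ofFn x).rotate k.val := by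
  apply List.ext_get
  · simp
  · intro i h1 h2
    rw [List.get_ofFn, List.get_rotate, List.get_ofFn]
    congr 1
    rw [Fin.add_def]
    apply Fin.ext
    simp

lemma isConj_prod_rotate (l : List G) (n : ℕ) : IsConj l.prod ((l.rotate n).prod) := by
  rcases eq_or_ne l [] with rfl | hl
  · simp
  have hlen : 0 < l.length := List.length_pos_iff.mpr hl
  rw [← List.rotate_mod]
  rw [List.rotate_eq_drop_append_take (le_of_lt (Nat.mod_lt _ hlen))]
  rw [List.prod_append]
  conv_lhs => rw [← List.take_append_drop (n % l.length) l, List.prod_append]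
  exact isConj_iff.mpr ⟨(l.drop (n % l.length)).prod, by group⟩

lemma card_cl_dvd (c : G) : (cl c).card ∣ Fintype.card G := by
  have h1 : (cl c).card = Fintype.card {x : G // IsConj c x} :=
    (Fintype.card_subtype _).symm
  haveI : Fintype (MulAction.orbit (ConjAct G) c) := Fintype.ofFinite _
  have h2 : Fintype.card {x : G // IsConj c x}
      = Fintype.card (MulAction.orbit (ConjAct G) c) := by
    refine Fintype.card_congr (Equiv.subtypeEquivRight fun x => ?_)
    rw [ConjAct.mem_orbit_conjAct]
    exact isConj_comm
  have h3 := MulAction.card_orbit_mul_card_stabilizer_eq_card_group (ConjAct G) c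
  refine ⟨Fintype.card (MulAction.stabilizer (ConjAct G) c), ?_⟩
  rw [h1, h2, h3]
  rfl


lemma pow_p_injective (hpG : ¬ p ∣ Fintype.card G) :
    Function.Injective (fun x : G => x ^ p) := by
  have hcop : (Nat.card G).Coprime p := by
    rw [Nat.coprime_comm]
    rw [Nat.card_eq_fintype_card]
    exact (Nat.Prime.coprime_iff_not_dvd Fact.out).mpr hpG
  intro x y hxy
  exact (powCoprime hcop).injective hxy

lemma isConj_pow_pow {x y : G} (hxy : IsConj x y) (n : ℕ) : IsConj (x ^ n) (y ^ n) := by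
  obtain ⟨u, hu⟩ := isConj_iff.mp hxy
  refine isConj_iff.mpr ⟨u, ?_⟩
  rw [← hu]
  rw [conj_pow]

lemma K_pow (hpG : ¬ p ∣ Fintype.card G) (g : G) : (K p g) ^ p = K p (g ^ p) := by
  haveI : NeZero p := ⟨(Fact.out : p.Prime).ne_zero⟩
  have hinj := pow_p_injective p hpG
  have hconj_iff : ∀ x y : G, IsConj (x ^ p) (y ^ p) ↔ IsConj x y := by
    intro x y
    refine ⟨fun hc => ?_, fun hc => isConj_pow_pow hc p⟩
    obtain ⟨u, hu⟩ := isConj_iff.mp hc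
    rw [← conj_pow] at hu
    exact isConj_iff.mpr ⟨u, hinj hu⟩
  set z := (K p g) ^ p with hz
  have hzcomm : ∀ f, Commute z f := fun f => (K_comm p g f).pow_left p
  have hzlist : z = (List.ofFn (fun _ : Fin p => K p g)).prod := by
    rw [List.ofFn_const, List.prod_replicate]
  -- coefficientwise computation
  ext c
  rw [K_apply]
  -- the fiber counting set
  set T := Finset.univ.filter
    (fun x : Fin p → G => (∀ i, IsConj g (x i)) ∧ IsConj c ((List.ofFn x).prod)) with hT
  have key : ((cl c).card : ZMod p) * z.coeff c = (T.card : ZMod p) := by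
    have h1 : ∑ c' ∈ cl c, z.coeff c' = ((cl c).card : ZMod p) * z.coeff c := by
      rw [Finset.sum_congr rfl (fun c' hc' => coeff_conj p hzcomm (mem_cl.mp hc'))]
      rw [Finset.sum_const, nsmul_eq_mul]
    have h2 : T.card = ∑ c' ∈ cl c, (solSet (fun _ : Fin p => g) c').card := by
      rw [Finset.card_eq_sum_card_fiberwise
        (f := fun x => (List.ofFn x).prod) (t := cl c)
        (fun x hx => mem_cl.mpr (Finset.mem_filter.mp hx).2.2)]
      refine Finset.sum_congr rfl fun c' hc' => ?_
      congr 1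
      ext x
      simp only [hT, Finset.mem_filter, Finset.mem_univ, true_and, mem_solSet]
      constructor
      · rintro ⟨⟨hx1, -⟩, hx2⟩
        exact ⟨hx1, hx2⟩
      · rintro ⟨hx1, hx2⟩
        exact ⟨⟨hx1, hx2 ▸ mem_cl.mp hc'⟩, hx2⟩
    rw [← h1, h2]
    push_cast
    refine Finset.sum_congr rfl fun c' _ => ?_
    rw [hzlist, coeff_listProd]
  -- the rotation action
  set α := {x : Fin p → G // (∀ i, IsConj g (x i)) ∧ IsConj c ((List.ofFn x).prod)} with hα
  have hTα : T.card = Nat.card α := by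
    rw [Nat.card_eq_fintype_card, Fintype.card_subtype]
  letI : SMul (Multiplicative (Fin p)) α := ⟨fun k x =>
    ⟨fun i => x.1 (i + k.toAdd), fun i => x.2.1 _, by
      rw [ofFn_rotate]
      exact x.2.2.trans (isConj_prod_rotate _ _)⟩⟩
  letI : MulAction (Multiplicative (Fin p)) α :=
    { one_smul := fun x => Subtype.ext (funext fun i => by
        show x.1 (i + (1 : Multiplicative (Fin p)).toAdd) = x.1 i
        rw [toAdd_one, add_zero])
      mul_smul := fun k l x => Subtype.ext (funext fun i => by
        show x.1 (i + (k * l).toAdd) = x.1 (i + k.toAdd + l.toAdd)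
        rw [toAdd_mul, add_assoc]) }
  have hpgroup : IsPGroup p (Multiplicative (Fin p)) :=
    IsPGroup.of_card (n := 1) (by simp)
  have hfix := hpgroup.card_modEq_card_fixedPoints α
  -- identify the fixed points
  set β := {g' : G // IsConj g g' ∧ IsConj c (g' ^ p)} with hβ
  have hfixβ : Nat.card (MulAction.fixedPoints (Multiplicative (Fin p)) α) = Nat.card β := by
    refine Nat.card_congr ?_
    refine
      { toFun := fun x => ⟨x.1.1 0, x.1.2.1 0, ?_⟩
        invFun := fun g' => ⟨⟨fun _ => g'.1, fun _ => g'.2.1, ?_⟩, ?_⟩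
        left_inv := ?_
        right_inv := fun g' => rfl }
    · have hconst : ∀ i : Fin p, x.1.1 i = x.1.1 0 := by
        intro i
        have := x.2 (Multiplicative.ofAdd i)
        have h0 := congrFun (congrArg Subtype.val this) 0
        show x.1.1 i = x.1.1 0
        rw [← h0]
        show x.1.1 i = x.1.1 (0 + (Multiplicative.ofAdd i).toAdd)
        rw [toAdd_ofAdd, zero_add]
      have : x.1.1 = fun _ => x.1.1 0 := funext hconst
      have hprod := x.1.2.2
      rw [this, List.ofFn_const, List.prod_replicate] at hprod
      exact hprod
    · rw [List.ofFn_const, List.prod_replicate]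
      exact g'.2.2
    · intro k
      exact Subtype.ext (funext fun i => rfl)
    · intro x
      refine Subtype.ext (Subtype.ext (funext fun i => ?_))
      show x.1.1 0 = x.1.1 i
      have := x.2 (Multiplicative.ofAdd i)
      have h0 := congrFun (congrArg Subtype.val this) 0
      rw [← h0]
      show x.1.1 (0 + (Multiplicative.ofAdd i).toAdd) = x.1.1 i
      rw [toAdd_ofAdd, zero_add]
  -- T.card mod p is the number of fixed points
  have hTmod : (T.card : ZMod p) = (Nat.card β : ZMod p) := by
    rw [hTα, ZMod.natCast_eq_natCast_iff]
    exact hfix.trans (hfixβ ▸ Nat.ModEq.refl _)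
  by_cases hc : IsConj (g ^ p) c
  · rw [if_pos hc]
    have hβcard : Nat.card β = (cl g).card := by
      have e : β ≃ {g' : G // IsConj g g'} :=
        Equiv.subtypeEquivRight fun g' =>
          ⟨And.left, fun hA => ⟨hA, hc.symm.trans (isConj_pow_pow hA p)⟩⟩
      rw [Nat.card_congr e, Nat.card_eq_fintype_card, Fintype.card_subtype]
      rfl
    have hclcard : (cl c).card = (cl g).card := by
      rw [← cl_eq_cl hc]
      symm
      refine Finset.card_bij (fun x _ => x ^ p) ?_ ?_ ?_
      · intro x hx
        exact mem_cl.mpr (isConj_pow_pow (mem_cl.mp hx) p)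
      · intro x _ y _ hxy
        exact hinj hxy
      · intro y hy
        obtain ⟨u, hu⟩ := isConj_iff.mp (mem_cl.mp hy)
        rw [← conj_pow] at hu
        exact ⟨u * g * u⁻¹, mem_cl.mpr (isConj_iff.mpr ⟨u, rfl⟩), hu⟩
    have hne : ((cl g).card : ZMod p) ≠ 0 := by
      rw [Ne, ZMod.natCast_eq_zero_iff]
      intro hdvd
      exact hpG (hdvd.trans (card_cl_dvd (c := g)))
    rw [hclcard, hTmod, hβcard] at key
    have : ((cl g).card : ZMod p) * z.coeff c = ((cl g).card : ZMod p) * 1 := by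
      rw [key, mul_one]
    exact mul_left_cancel₀ hne this
  · rw [if_neg hc]
    have hβ0 : Nat.card β = 0 := by
      rw [Nat.card_eq_zero]
      left
      refine ⟨fun x => ?_⟩
      exact hc ((isConj_pow_pow x.2.1 p).trans x.2.2.symm)
    have hne : ((cl c).card : ZMod p) ≠ 0 := by
      rw [Ne, ZMod.natCast_eq_zero_iff]
      intro hdvd
      exact hpG (hdvd.trans (card_cl_dvd (c := c)))
    rw [hTmod, hβ0, Nat.cast_zero] at key
    exact (mul_eq_zero.mp key).resolve_left hne


instance : CharP (MonoidAlgebra (ZMod p) G) p := by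
  refine charP_of_injective_algebraMap (R := ZMod p) ?_ p
  rw [MonoidAlgebra.coe_algebraMap]
  exact fun x y hxy => by
    simpa using MonoidAlgebra.single_right_injective (R := ZMod p) (m := (1 : G)) (by simpa using hxy)

lemma sum_pow_char_comm {ι : Type*} (s : Finset ι) (f : ι → MonoidAlgebra (ZMod p) G)
    (hf : ∀ i, ∀ g, Commute (f i) g) : (∑ i ∈ s, f i) ^ p = ∑ i ∈ s, f i ^ p := by
  induction s using Finset.cons_induction with
  | empty => simp [zero_pow (Fact.out : p.Prime).ne_zero]
  | cons a s ha ih =>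
    rw [Finset.sum_cons, Finset.sum_cons, add_pow_char_of_commute _ (hf a _), ih]

lemma listprod_pow (l : List (MonoidAlgebra (ZMod p) G))
    (hl : ∀ x ∈ l, ∀ g, Commute x g) : l.prod ^ p = (l.map (· ^ p)).prod := by
  induction l with
  | nil => simp
  | cons x t ih =>
    rw [List.prod_cons, List.map_cons, List.prod_cons,
      (hl x List.mem_cons_self t.prod).mul_pow,
      ih fun y hy => hl y (List.mem_cons_of_mem x hy)]

/-- A choice of representative of a conjugacy class. -/
noncomputable def rep (O : ConjClasses G) : G := (ConjClasses.exists_rep O).choose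

lemma mk_rep (O : ConjClasses G) : ConjClasses.mk (rep O) = O :=
  (ConjClasses.exists_rep O).choose_spec

lemma isConj_rep_iff (O : ConjClasses G) (x : G) :
    IsConj (rep O) x ↔ O = ConjClasses.mk x := by
  rw [← ConjClasses.mk_eq_mk_iff_isConj, mk_rep]

lemma central_eq_sum (z : MonoidAlgebra (ZMod p) G) (hz : ∀ f, Commute z f) :
    z = ∑ O : ConjClasses G, z.coeff (rep O) • K p (rep O) := by
  ext x
  rw [MonoidAlgebra.coeff_sum, Finset.sum_apply']
  have hterm : ∀ O : ConjClasses G,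
      (z.coeff (rep O) • K p (rep O)).coeff x
      = if O = ConjClasses.mk x then z.coeff (rep O) else 0 := by
    intro O
    rw [MonoidAlgebra.coeff_smul, Finsupp.smul_apply, K_apply, smul_eq_mul]
    simp only [isConj_rep_iff]
    by_cases hO : O = ConjClasses.mk x <;> simp [hO]
  rw [Finset.sum_congr rfl fun O _ => hterm O]
  rw [Finset.sum_ite_eq' Finset.univ (ConjClasses.mk x)
    (fun O => z.coeff (rep O))]
  rw [if_pos (Finset.mem_univ _)]
  exact coeff_conj p hz ((isConj_rep_iff _ x).mpr rfl)

lemma central_pow_p (hpG : ¬ p ∣ Fintype.card G) (z : MonoidAlgebra (ZMod p) G)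
    (hz : ∀ f, Commute z f) (c : G) : (z ^ p).coeff (c ^ p) = z.coeff c := by
  have hinj := pow_p_injective p hpG
  have hzsum := central_eq_sum p z hz
  have hsc : ∀ O : ConjClasses G, ∀ f,
      Commute (z.coeff (rep O) • K p (rep O)) f :=
    fun O f => (K_comm p _ f).smul_left _
  conv_lhs => rw [hzsum]
  rw [sum_pow_char_comm p _ _ hsc]
  have hterm : ∀ O : ConjClasses G,
      (z.coeff (rep O) • K p (rep O)) ^ p
      = z.coeff (rep O) • K p (rep O ^ p) := by
    intro O
    rw [smul_pow, ZMod.pow_card, K_pow p hpG]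
  rw [Finset.sum_congr rfl fun O _ => hterm O]
  rw [MonoidAlgebra.coeff_sum, Finset.sum_apply']
  have hterm2 : ∀ O : ConjClasses G,
      (z.coeff (rep O) • K p (rep O ^ p)).coeff (c ^ p)
      = if O = ConjClasses.mk c then z.coeff (rep O) else 0 := by
    intro O
    rw [MonoidAlgebra.coeff_smul, Finsupp.smul_apply, K_apply, smul_eq_mul]
    have : IsConj (rep O ^ p) (c ^ p) ↔ IsConj (rep O) c := by
      constructor
      · intro hc'
        obtain ⟨u, hu⟩ := isConj_iff.mp hc'
        rw [← conj_pow] at hu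
        exact isConj_iff.mpr ⟨u, hinj hu⟩
      · intro hc'
        exact isConj_pow_pow hc' p
    simp only [this, isConj_rep_iff]
    by_cases hO : O = ConjClasses.mk c <;> simp [hO]
  rw [Finset.sum_congr rfl fun O _ => hterm2 O]
  rw [Finset.sum_ite_eq' Finset.univ (ConjClasses.mk c)
    (fun O => z.coeff (rep O))]
  rw [if_pos (Finset.mem_univ _)]
  exact coeff_conj p hz ((isConj_rep_iff _ c).mpr rfl).symm

end BurnsideAux



open BurnsideAux

/-- If `h` is a product of elements of conjugacy classes `C₁, …, C_ℓ` and `m` is coprime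
to `|G|`, then `h^m` is a product of elements of `C₁^m, …, C_ℓ^m`. -/
theorem power_of_product_of_classes {G : Type*} [Group G] [Finite G]
    (ℓ : ℕ) (a : Fin ℓ → G) (h : G) (hprod : h = (List.ofFn a).prod)
    (m : ℤ) (hm : IsCoprime m (Nat.card G : ℤ)) :
    ∃ b : Fin ℓ → G, (∀ i, ∃ x : G, IsConj (a i) x ∧ x ^ m = b i) ∧
      (List.ofFn b).prod = h ^ m := by
  classical
  cases nonempty_fintype G
  haveI : NeZero (Nat.card G) := ⟨Nat.card_pos.ne'⟩
  set q := Nat.card G with hq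
  -- the residue class of m is a unit
  have hunit : IsUnit ((m : ZMod q)) := by
    have h1 := hm.map (Int.castRingHom (ZMod q))
    have h2 : ((q : ℤ) : ZMod q) = 0 := by
      push_cast
      exact ZMod.natCast_self q
    rw [IsCoprime] at h1
    obtain ⟨u, v, huv⟩ := h1
    simp only [Int.coe_castRingHom] at huv
    rw [h2, mul_zero, add_zero] at huv
    exact isCoprime_zero_right.mp ⟨u, 0, by rw [zero_mul, add_zero, huv]⟩
  -- the number of solutions for the original classes
  set N := (solSet a h).card with hN
  have hN0 : 0 < N :=
    Finset.card_pos.mpr ⟨a, mem_solSet.mpr ⟨fun i => IsConj.refl _, hprod.symm⟩⟩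
  -- Dirichlet: a prime p ≡ m [ZMod q] exceeding both N and q
  obtain ⟨p, hpgt, hpprime, hpmod⟩ :=
    Nat.forall_exists_prime_gt_and_eq_mod hunit (max N q)
  haveI : Fact p.Prime := ⟨hpprime⟩
  have hpq : ¬ p ∣ Fintype.card G := by
    intro hdvd
    have h1 : p ≤ q := by
      rw [hq, Nat.card_eq_fintype_card]
      exact Nat.le_of_dvd Fintype.card_pos hdvd
    exact absurd (lt_of_le_of_lt (le_max_right N q) hpgt) (not_lt.mpr h1)
  -- m-th powers and p-th powers agree in G
  have hcongr : ∀ x : G, x ^ m = x ^ (p : ℕ) := by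
    intro x
    have hdvd : (q : ℤ) ∣ (m - p) := by
      rw [← ZMod.intCast_zmod_eq_zero_iff_dvd]
      push_cast
      rw [sub_eq_zero]
      rw [← hpmod]
    obtain ⟨k, hk⟩ := hdvd
    have hqone : x ^ (q : ℤ) = 1 := by
      rw [zpow_natCast, hq, pow_card_eq_one']
    calc x ^ m = x ^ ((p : ℤ) + (m - p)) := by rw [add_sub_cancel]
      _ = x ^ (p : ℤ) * x ^ (m - p) := zpow_add x _ _
      _ = x ^ (p : ℤ) * ((x ^ (q : ℤ)) ^ k) := by rw [hk, zpow_mul]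
      _ = x ^ (p : ℕ) := by rw [hqone, one_zpow, mul_one, zpow_natCast]
  -- the group-algebra computation
  set z := (List.ofFn fun i => K p (a i)).prod with hz
  have hzcomm : ∀ f, Commute z f := by
    intro f
    apply Commute.list_prod_left
    intro x hx
    rw [List.mem_ofFn] at hx
    obtain ⟨i, rfl⟩ := hx
    exact K_comm p (a i) f
  have h1 : (z ^ p).coeff (h ^ p) = z.coeff h := central_pow_p p hpq z hzcomm h
  have h2 : z.coeff h = (N : ZMod p) := by rw [hz, coeff_listProd, hN]
  have h3 : z ^ p = (List.ofFn fun i => K p (a i ^ p)).prod := by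
    rw [hz, listprod_pow p _ (by
      intro x hx g
      rw [List.mem_ofFn] at hx
      obtain ⟨i, rfl⟩ := hx
      exact K_comm p (a i) g), List.map_ofFn]
    exact congrArg (fun f => (List.ofFn f).prod) (funext fun i => K_pow p hpq (a i))
  have hNne : ((N : ZMod p)) ≠ 0 := by
    rw [Ne, ZMod.natCast_eq_zero_iff]
    intro hdvd
    have : p ≤ N := Nat.le_of_dvd hN0 hdvd
    exact absurd (lt_of_le_of_lt (le_max_left N q) hpgt) (not_lt.mpr this)
  have h4 : ((solSet (fun i => a i ^ p) (h ^ p)).card : ZMod p) ≠ 0 := by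
    rw [← coeff_listProd, ← h3, h1, h2]
    exact hNne
  have h5 : (solSet (fun i => a i ^ p) (h ^ p)).Nonempty := by
    rw [Finset.nonempty_iff_ne_empty]
    intro hemp
    rw [hemp] at h4
    simp at h4
  obtain ⟨x, hx⟩ := h5
  rw [mem_solSet] at hx
  refine ⟨x, fun i => ?_, ?_⟩
  · obtain ⟨u, hu⟩ := isConj_iff.mp (hx.1 i)
    rw [← conj_pow] at hu
    refine ⟨u * a i * u⁻¹, isConj_iff.mpr ⟨u, rfl⟩, ?_⟩
    rw [hcongr, hu]
  · rw [hx.2, hcongr]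
end

section
/- Let G be a group, v = v(x₁,…,x_{k}, y) and w = w(z₁,…,z_l) words (on disjoint variables). Suppose v has the property (∗): for every h ∈ G, every tuple g ∈ G^k, and every m coprime to the order of h, there exist finitely many tuples g_i ∈ G^k and elements c_i ∈ G with v(g, h) = ∏_i v(g_i, h^m)^{c_i}. Then the commutator word [v, w] also has property (∗): for all h, g ∈ G^k, g' ∈ G^l, and m coprime to ord(h), the element [v(g,h), w(g')] is a product of conjugates of elements of the form [v(g_i, h^m), w((g')^{c_i^{-1}})]. -/
open scoped commutatorElement

private lemma lift_conj {G : Type*} [Group G] {l : ℕ} (w : FreeGroup (Fin l))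
    (g' : Fin l → G) (c : G) :
    FreeGroup.lift (fun j => c * g' j * c⁻¹) w = c * FreeGroup.lift g' w * c⁻¹ := by
  have : FreeGroup.lift (fun j => c * g' j * c⁻¹) =
      (MulAut.conj c).toMonoidHom.comp (FreeGroup.lift g') := by
    ext j
    simp
  rw [this]
  simp

private lemma conj_map_prod {G : Type*} [Group G] {α : Type*} (f : α → G) (φ : α → α)
    (a : G) (hφ : ∀ x, f (φ x) = a * f x * a⁻¹) (M : List α) :
    ((M.map φ).map f).prod = a * (M.map f).prod * a⁻¹ := by
  induction M with
  | nil => simp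
  | cons x M ih =>
    simp only [List.map_cons, List.prod_cons, ih, hφ]
    group

/-- If the word `v(x₁,…,x_k,y)` has property (∗) — every value `v(g,h)` is a product of
conjugates of values `v(gᵢ,h^m)` for `m` coprime to the order of `h` — then so does the
commutator word `[v,w]` for any word `w` on disjoint variables. -/
theorem property_star_commutator {G : Type*} [Group G] [Finite G] (k l : ℕ)
    (v : FreeGroup (Fin (k + 1))) (w : FreeGroup (Fin l))
    (hv : ∀ (h : G) (g : Fin k → G) (m : ℤ), IsCoprime m (orderOf h : ℤ) →
      ∃ L : List ((Fin k → G) × G),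
        FreeGroup.lift (Fin.snoc g h) v =
          (L.map fun p => p.2⁻¹ * FreeGroup.lift (Fin.snoc p.1 (h ^ m)) v * p.2).prod) :
    ∀ (h : G) (g : Fin k → G) (g' : Fin l → G) (m : ℤ),
      IsCoprime m (orderOf h : ℤ) →
      ∃ L : List ((Fin k → G) × (Fin l → G) × G),
        ⁅FreeGroup.lift (Fin.snoc g h) v, FreeGroup.lift g' w⁆ =
          (L.map fun p => p.2.2⁻¹ *
            ⁅FreeGroup.lift (Fin.snoc p.1 (h ^ m)) v,
              FreeGroup.lift p.2.1 w⁆ * p.2.2).prod := by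
  intro h g g' m hm
  obtain ⟨L, hL⟩ := hv h g m hm
  rw [hL]; clear hL
  induction L with
  | nil => exact ⟨[], by simp⟩
  | cons p L ih =>
    obtain ⟨L', hL'⟩ := ih
    set V := FreeGroup.lift (Fin.snoc p.1 (h ^ m)) v with hV
    set b := FreeGroup.lift g' w with hb
    set a := p.2⁻¹ * V * p.2 with ha
    refine ⟨(L'.map fun q => (q.1, q.2.1, q.2.2 * a⁻¹)) ++
      [(p.1, fun j => p.2 * g' j * p.2⁻¹, p.2)], ?_⟩
    rw [List.map_append, List.prod_append]
    rw [conj_map_prod _ _ a (fun q => by group) L', ← hL']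
    simp only [List.map_cons, List.prod_cons, List.map_nil, List.prod_nil, mul_one,
      lift_conj w g' p.2, ← hV, ← hb, ← ha]
    rw [ha]
    simp only [commutatorElement_def]
    group
end
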